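/- arXiv:1912.04551 — 7 statements merged into one kernel-verified Lean document; each statement's English description precedes it below -/
import Mathlib

section
/- Let F be a field with char F ≠ 2, Ω a nonempty finite set, and A ⊆ M_Ω(F) a linear subspace closed under the Hadamard (entrywise) product. Then there exists a unique basis A_1, ..., A_r of A consisting of 0-1 matrices with pairwise disjoint supports (supp(A_i) ∩ supp(A_j) = ∅ whenever i ≠ j). Moreover: (a) if the identity matrix I_Ω belongs to A, then I_Ω = Σ_{i∈F'} A_i for some subset F' ⊆ {1,...,r}; (b) if the all-ones matrix J_Ω belongs to A, then Σ_{i=1}^r A_i = J_Ω; (c) if A is closed under transposition, then the set {A_1,...,A_r} is closed under transposition. -/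
/-!
Closure under `⊙` lets one apply entrywise to any `x ∈ A` a polynomial without constant term,
so the indicator matrix of every nonzero level set of `x` lies in `A`; hence `A` is spanned by
its 0-1 matrices. These are the adjacency matrices of a family of relations closed under
intersection and difference, so its minimal nonempty members are pairwise disjoint and every
member is the union of the minimal ones it contains: their adjacency matrices form the basis.
Conversely, in any basis of 0-1 matrices with disjoint supports every element of `A` is constant
on each support, so each support is minimal.
-/

open Matrix

noncomputable section

namespace JordanPaper

open scoped Classical

variable {Ω : Type*}

/-- The adjacency matrix (over `F`) of a binary relation on `Ω`. -/
def adj (F : Type*) [Zero F] [One F] (c : Set (Ω × Ω)) : Matrix Ω Ω F :=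
  Matrix.of fun a b => if (a, b) ∈ c then 1 else 0

/-- The all-ones matrix. -/
def allOnes (F : Type*) [One F] : Matrix Ω Ω F :=
  Matrix.of fun _ _ => 1

/-- The diagonal relation `1_Δ` on a subset `Δ ⊆ Ω`. -/
def diagRel (Δ : Set Ω) : Set (Ω × Ω) := {p | p.1 = p.2 ∧ p.1 ∈ Δ}

/-- The transposed relation. -/
def transposeRel (c : Set (Ω × Ω)) : Set (Ω × Ω) := {p | (p.2, p.1) ∈ c}

/-- `outSet c α = c(α) = {β | (α,β) ∈ c}`. -/
def outSet (c : Set (Ω × Ω)) (α : Ω) : Set Ω := {β | (α, β) ∈ c}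

/-- A partition of `Ω × Ω` into nonempty pairwise disjoint classes. -/
def IsPartition (P : Set (Set (Ω × Ω))) : Prop :=
  (∀ c ∈ P, c.Nonempty) ∧ (∀ c ∈ P, ∀ d ∈ P, c ≠ d → c ∩ d = ∅) ∧ ⋃₀ P = Set.univ

/-- A partition of `Δ × Δ` into nonempty pairwise disjoint classes. -/
def IsPartitionOn (Δ : Set Ω) (P : Set (Set (Ω × Ω))) : Prop :=
  (∀ c ∈ P, c.Nonempty) ∧ (∀ c ∈ P, ∀ d ∈ P, c ≠ d → c ∩ d = ∅) ∧ ⋃₀ P = Δ ×ˢ Δ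

/-- A rainbow: a partition of `Ω × Ω` such that the diagonal is a union of classes
and the set of classes is closed under transposition. -/
def IsRainbow (P : Set (Set (Ω × Ω))) : Prop :=
  IsPartition P ∧
  (∀ c ∈ P, (c ∩ diagRel (Set.univ : Set Ω)).Nonempty → c ⊆ diagRel (Set.univ : Set Ω)) ∧
  (∀ c ∈ P, transposeRel c ∈ P)

/-- `|c(α) ∩ dᵀ(β)|`. -/
def cnum (c d : Set (Ω × Ω)) (α β : Ω) : ℕ :=
  (outSet c α ∩ outSet (transposeRel d) β).ncard

/-- `|c(α) ∩ dᵀ(β)| + |d(α) ∩ cᵀ(β)|`. -/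
def jnum (c d : Set (Ω × Ω)) (α β : Ω) : ℕ :=
  cnum c d α β + cnum d c α β

/-- The coherence (intersection-number) condition. -/
def IsCoherentCond (P : Set (Set (Ω × Ω))) : Prop :=
  ∀ c ∈ P, ∀ d ∈ P, ∀ f ∈ P, ∀ p ∈ f, ∀ q ∈ f,
    cnum c d (p : Ω × Ω).1 (p : Ω × Ω).2 = cnum c d (q : Ω × Ω).1 (q : Ω × Ω).2

/-- The Jordan (symmetrized intersection-number) condition. -/
def IsJordanCond (P : Set (Set (Ω × Ω))) : Prop :=
  ∀ c ∈ P, ∀ d ∈ P, ∀ f ∈ P, ∀ p ∈ f, ∀ q ∈ f,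
    jnum c d (p : Ω × Ω).1 (p : Ω × Ω).2 = jnum c d (q : Ω × Ω).1 (q : Ω × Ω).2

/-- A coherent configuration. -/
def IsCoherentConfig (P : Set (Set (Ω × Ω))) : Prop := IsRainbow P ∧ IsCoherentCond P

/-- A Jordan configuration. -/
def IsJordanConfig (P : Set (Set (Ω × Ω))) : Prop := IsRainbow P ∧ IsJordanCond P

/-- An association scheme on a subset `Δ` (homogeneous coherent configuration on `Δ`). -/
def IsAssocSchemeOn (Δ : Set Ω) (P : Set (Set (Ω × Ω))) : Prop :=
  IsPartitionOn Δ P ∧ diagRel Δ ∈ P ∧ (∀ c ∈ P, transposeRel c ∈ P) ∧ IsCoherentCond P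

/-- The Jordan product of matrices. -/
def jmul (F : Type*) [Field F] [Fintype Ω] (x y : Matrix Ω Ω F) : Matrix Ω Ω F :=
  (2 : F)⁻¹ • (x * y + y * x)

/-- A coherent algebra. -/
def IsCoherentAlgebra (F : Type*) [Field F] [Fintype Ω] [DecidableEq Ω]
    (A : Submodule F (Matrix Ω Ω F)) : Prop :=
  (1 : Matrix Ω Ω F) ∈ A ∧ allOnes F ∈ A ∧ (∀ x ∈ A, xᵀ ∈ A) ∧
  (∀ x ∈ A, ∀ y ∈ A, x * y ∈ A) ∧ (∀ x ∈ A, ∀ y ∈ A, Matrix.hadamard x y ∈ A)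

/-- A coherent Jordan algebra. -/
def IsCoherentJAlgebra (F : Type*) [Field F] [Fintype Ω] [DecidableEq Ω]
    (A : Submodule F (Matrix Ω Ω F)) : Prop :=
  (1 : Matrix Ω Ω F) ∈ A ∧ allOnes F ∈ A ∧ (∀ x ∈ A, xᵀ ∈ A) ∧
  (∀ x ∈ A, ∀ y ∈ A, jmul F x y ∈ A) ∧ (∀ x ∈ A, ∀ y ∈ A, Matrix.hadamard x y ∈ A)

/-- A basis of `A` consisting of 0-1 matrices with pairwise disjoint supports. -/
def GoodBasis {F : Type*} [Field F] {Ω : Type*} [Fintype Ω]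
    (A : Submodule F (Matrix Ω Ω F)) (B : Finset (Matrix Ω Ω F)) : Prop :=
  (∀ M ∈ B, ∀ a b, M a b = 0 ∨ M a b = 1) ∧
  (∀ M ∈ B, ∀ N ∈ B, M ≠ N → ∀ a b, M a b = 0 ∨ N a b = 0) ∧
  LinearIndependent F (fun M : {x // x ∈ B} => (M : Matrix Ω Ω F)) ∧
  Submodule.span F (B : Set (Matrix Ω Ω F)) = A

def HadamardClosed {F : Type*} [Field F] {Ω : Type*} (A : Submodule F (Matrix Ω Ω F)) : Prop :=
  ∀ x ∈ A, ∀ y ∈ A, x ⊙ y ∈ A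

section HadamardClosed

variable {F : Type*} [Field F] {A : Submodule F (Matrix Ω Ω F)}

def IsAdmissible (A : Submodule F (Matrix Ω Ω F)) (c : Set (Ω × Ω)) : Prop :=
  c.Nonempty ∧ adj F c ∈ A

abbrev IsBasisRel (A : Submodule F (Matrix Ω Ω F)) (c : Set (Ω × Ω)) : Prop :=
  Minimal (IsAdmissible A) c

lemma adj_apply (c : Set (Ω × Ω)) (a b : Ω) : adj F c a b = if (a, b) ∈ c then 1 else 0 := rfl

lemma adj_apply_eq_zero_or_one (c : Set (Ω × Ω)) (a b : Ω) :
    adj F c a b = 0 ∨ adj F c a b = 1 := by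
  rw [adj_apply]
  split_ifs <;> simp

lemma adj_apply_eq_one_iff {c : Set (Ω × Ω)} {a b : Ω} : adj F c a b = 1 ↔ (a, b) ∈ c := by
  rw [adj_apply]
  split_ifs with h <;> simp [h]

lemma adj_injective : Function.Injective (adj F : Set (Ω × Ω) → Matrix Ω Ω F) := by
  intro c d h
  ext ⟨a, b⟩
  rw [← adj_apply_eq_one_iff (F := F), h, adj_apply_eq_one_iff]

lemma eq_adj_of_zero_or_one {M : Matrix Ω Ω F} (hM : ∀ a b, M a b = 0 ∨ M a b = 1) :
    M = adj F {p | M p.1 p.2 = 1} := by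
  ext a b
  rcases hM a b with h | h <;> simp [adj_apply, h]

lemma adj_empty : adj F (∅ : Set (Ω × Ω)) = 0 := by
  ext a b
  simp [adj_apply]

lemma adj_inter (c d : Set (Ω × Ω)) : adj F (c ∩ d) = adj F c ⊙ adj F d := by
  ext a b
  by_cases hc : (a, b) ∈ c <;> by_cases hd : (a, b) ∈ d <;> simp [adj_apply, hc, hd]

lemma adj_diff (c d : Set (Ω × Ω)) : adj F (c \ d) = adj F c - adj F c ⊙ adj F d := by
  ext a b
  by_cases hc : (a, b) ∈ c <;> by_cases hd : (a, b) ∈ d <;> simp [adj_apply, hc, hd]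

lemma adj_transposeRel (c : Set (Ω × Ω)) : adj F (transposeRel c) = (adj F c)ᵀ := rfl

lemma adj_univ : adj F (Set.univ : Set (Ω × Ω)) = allOnes F := by
  ext a b
  simp [adj_apply, allOnes]

lemma adj_diagRel [DecidableEq Ω] :
    adj F (diagRel (Set.univ : Set Ω)) = (1 : Matrix Ω Ω F) := by
  ext a b
  by_cases h : a = b <;> simp [adj_apply, diagRel, Matrix.one_apply, h]

lemma adj_inter_mem (hA : HadamardClosed A) {c d : Set (Ω × Ω)} (hc : adj F c ∈ A)
    (hd : adj F d ∈ A) : adj F (c ∩ d) ∈ A :=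
  adj_inter (F := F) c d ▸ hA _ hc _ hd

lemma adj_diff_mem (hA : HadamardClosed A) {c d : Set (Ω × Ω)} (hc : adj F c ∈ A)
    (hd : adj F d ∈ A) : adj F (c \ d) ∈ A :=
  adj_diff (F := F) c d ▸ A.sub_mem hc (hA _ hc _ hd)

lemma IsBasisRel.eq_of_inter_nonempty (hA : HadamardClosed A) {c d : Set (Ω × Ω)}
    (hc : IsBasisRel A c) (hd : IsBasisRel A d) (h : (c ∩ d).Nonempty) :
    c = d := by
  have hcd : IsAdmissible A (c ∩ d) := ⟨h, adj_inter_mem hA hc.1.2 hd.1.2⟩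
  rw [← hc.eq_of_le hcd Set.inter_subset_left, hd.eq_of_le hcd Set.inter_subset_right]

lemma IsBasisRel.transposeRel (hT : ∀ x ∈ A, xᵀ ∈ A) {c : Set (Ω × Ω)}
    (hc : IsBasisRel A c) : IsBasisRel A (transposeRel c) := by
  refine ⟨⟨?_, hT _ hc.1.2⟩, fun d hd hdc => ?_⟩
  · obtain ⟨p, hp⟩ := hc.1.1
    exact ⟨p.swap, hp⟩
  · have hd' : IsAdmissible A (JordanPaper.transposeRel d) := by
      obtain ⟨p, hp⟩ := hd.1
      exact ⟨⟨p.swap, hp⟩, hT _ hd.2⟩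
    exact fun p hp => hc.2 hd' (fun q hq => hdc hq) hp

lemma sum_smul_apply_of_disjoint {B : Finset (Matrix Ω Ω F)}
    (hdisj : ∀ M ∈ B, ∀ N ∈ B, M ≠ N → ∀ a b, M a b = 0 ∨ N a b = 0)
    (f : Matrix Ω Ω F → F) {M : Matrix Ω Ω F} (hM : M ∈ B) {a b : Ω} (h1 : M a b = 1) :
    (∑ N ∈ B, f N • N) a b = f M := by
  rw [Matrix.sum_apply, Finset.sum_eq_single_of_mem M hM]
  · simp [h1]
  · intro N hN hNM
    rcases hdisj M hM N hN hNM.symm a b with h | h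
    · exact absurd (h.symm.trans h1) zero_ne_one
    · simp [h]

lemma linearIndependent_of_disjoint {B : Finset (Matrix Ω Ω F)}
    (hdisj : ∀ M ∈ B, ∀ N ∈ B, M ≠ N → ∀ a b, M a b = 0 ∨ N a b = 0)
    (hone : ∀ M ∈ B, ∃ a b, M a b = 1) :
    LinearIndependent F (fun M : {x // x ∈ B} => (M : Matrix Ω Ω F)) := by
  refine linearIndepOn_finset_iff (v := id).2 fun f hf M hM => ?_
  obtain ⟨a, b, h1⟩ := hone M hM
  simp only [id] at hf
  rw [← sum_smul_apply_of_disjoint hdisj f hM h1, hf, Matrix.zero_apply]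

lemma map_mul_prod_sub_mem (hA : HadamardClosed A) {x : Matrix Ω Ω F} (hx : x ∈ A)
    (s : Finset F) : x.map (fun t => t * ∏ μ ∈ s, (t - μ)) ∈ A := by
  induction s using Finset.induction with
  | empty => simpa using hx
  | insert μ s hμ ih =>
    have h : x.map (fun t => t * ∏ ν ∈ insert μ s, (t - ν)) =
        x ⊙ x.map (fun t => t * ∏ ν ∈ s, (t - ν)) - μ • x.map (fun t => t * ∏ ν ∈ s, (t - ν)) := by
      ext a b
      simp only [Matrix.map_apply, Matrix.hadamard_apply, Matrix.sub_apply, Matrix.smul_apply,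
        smul_eq_mul, Finset.prod_insert hμ]
      ring
    rw [h]
    exact A.sub_mem (hA _ hx _ ih) (A.smul_mem _ ih)

variable [Fintype Ω]

lemma adj_level_mem (hA : HadamardClosed A) {x : Matrix Ω Ω F} (hx : x ∈ A) {μ : F}
    (hμ : μ ≠ 0) : adj F {p | x p.1 p.2 = μ} ∈ A := by
  set s := (Finset.univ.image fun p : Ω × Ω => x p.1 p.2) \ {0, μ}
  -- `t * ∏ ν ∈ s, (t - ν)` vanishes on the entries of `x` other than `μ`
  have hc : μ * ∏ ν ∈ s, (μ - ν) ≠ 0 :=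
    mul_ne_zero hμ (Finset.prod_ne_zero_iff.2 fun ν hν => sub_ne_zero.2 fun h => by
      simp [s, h] at hν)
  convert A.smul_mem (μ * ∏ ν ∈ s, (μ - ν))⁻¹ (map_mul_prod_sub_mem hA hx s) using 1
  ext a b
  simp only [adj_apply, Set.mem_ofPred_eq, Matrix.smul_apply, Matrix.map_apply, smul_eq_mul]
  split_ifs with h
  · rw [h, inv_mul_cancel₀ hc]
  · by_cases h0 : x a b = 0
    · simp [h0]
    · have hmem : x a b ∈ s :=
        Finset.mem_sdiff.2 ⟨Finset.mem_image_of_mem _ (Finset.mem_univ (a, b)), by simp [h0, h]⟩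
      rw [Finset.prod_eq_zero hmem (sub_self _), mul_zero, mul_zero]

lemma eq_sum_smul_adj_level (x : Matrix Ω Ω F) :
    x = ∑ μ ∈ Finset.univ.image (fun p : Ω × Ω => x p.1 p.2), μ • adj F {p | x p.1 p.2 = μ} := by
  ext a b
  simp only [Matrix.sum_apply, Matrix.smul_apply, adj_apply, Set.mem_ofPred_eq, smul_eq_mul,
    mul_ite, mul_one, mul_zero, Finset.sum_ite_eq]
  rw [if_pos (Finset.mem_image_of_mem _ (Finset.mem_univ (a, b)))]

lemma exists_isBasisRel_mem_subset (hA : HadamardClosed A) {c : Set (Ω × Ω)} (hc : adj F c ∈ A)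
    {p : Ω × Ω} (hp : p ∈ c) : ∃ d, IsBasisRel A d ∧ p ∈ d ∧ d ⊆ c := by
  obtain ⟨d, -, ⟨hdA, hpd, hdc⟩, hmin⟩ := exists_minimal_le_of_wellFoundedLT
    (fun d => adj F d ∈ A ∧ p ∈ d ∧ d ⊆ c) c ⟨hc, hp, subset_rfl⟩
  refine ⟨d, ⟨⟨⟨p, hpd⟩, hdA⟩, fun e he hed => ?_⟩, hpd, hdc⟩
  by_cases hpe : p ∈ e
  · exact hmin ⟨he.2, hpe, hed.trans hdc⟩ hed
  · -- otherwise `d \ e` would be a smaller candidate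
    obtain ⟨q, hq⟩ := he.1
    have hde := hmin ⟨adj_diff_mem hA hdA he.2, ⟨hpd, hpe⟩, Set.sdiff_subset.trans hdc⟩
      Set.sdiff_subset (hed hq)
    exact absurd hq hde.2

lemma sum_image_adj (s : Finset (Set (Ω × Ω))) :
    ∑ M ∈ s.image (adj F), M = ∑ d ∈ s, adj F d :=
  Finset.sum_image fun _ _ _ _ h => adj_injective h

variable (A) in
def basisRels : Finset (Set (Ω × Ω)) := Finset.univ.filter (IsBasisRel A)

variable (A) in
def basisMatrices : Finset (Matrix Ω Ω F) := (basisRels A).image (adj F)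

lemma mem_basisRels {c : Set (Ω × Ω)} : c ∈ basisRels A ↔ IsBasisRel A c := by
  simp [basisRels]

lemma mem_basisMatrices {M : Matrix Ω Ω F} :
    M ∈ basisMatrices A ↔ ∃ c, IsBasisRel A c ∧ adj F c = M := by
  simp [basisMatrices, mem_basisRels]

lemma adj_eq_sum_basisRels (hA : HadamardClosed A) {c : Set (Ω × Ω)} (hc : adj F c ∈ A) :
    adj F c = ∑ d ∈ (basisRels A).filter (· ⊆ c), adj F d := by
  ext a b
  rw [Matrix.sum_apply]
  by_cases hab : (a, b) ∈ c
  · obtain ⟨d, hd, habd, hdc⟩ := exists_isBasisRel_mem_subset hA hc hab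
    rw [Finset.sum_eq_single_of_mem d (Finset.mem_filter.2 ⟨mem_basisRels.2 hd, hdc⟩)]
    · rw [adj_apply_eq_one_iff.2 hab, adj_apply_eq_one_iff.2 habd]
    · intro e he hed
      rw [Finset.mem_filter, mem_basisRels] at he
      rw [adj_apply, if_neg fun habe => hed (he.1.eq_of_inter_nonempty hA hd ⟨_, habe, habd⟩)]
  · rw [adj_apply, if_neg hab]
    refine (Finset.sum_eq_zero fun d hd => ?_).symm
    rw [adj_apply, if_neg fun h => hab ((Finset.mem_filter.1 hd).2 h)]

lemma span_basisMatrices (hA : HadamardClosed A) :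
    Submodule.span F (basisMatrices A : Set (Matrix Ω Ω F)) = A := by
  refine le_antisymm (Submodule.span_le.2 fun M hM => ?_) fun x hx => ?_
  · obtain ⟨c, hc, rfl⟩ := mem_basisMatrices.1 hM
    exact hc.1.2
  · rw [eq_sum_smul_adj_level x]
    refine Submodule.sum_mem _ fun μ _ => ?_
    rcases eq_or_ne μ 0 with rfl | hμ
    · simp
    refine Submodule.smul_mem _ _ ?_
    rw [adj_eq_sum_basisRels hA (adj_level_mem hA hx hμ)]
    exact Submodule.sum_mem _ fun d hd => Submodule.subset_span
      (Finset.mem_image_of_mem _ (Finset.mem_filter.1 hd).1)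

lemma goodBasis_basisMatrices (hA : HadamardClosed A) : GoodBasis A (basisMatrices A) := by
  have h01 : ∀ M ∈ basisMatrices A, ∀ a b, M a b = 0 ∨ M a b = 1 := by
    intro M hM a b
    obtain ⟨c, -, rfl⟩ := mem_basisMatrices.1 hM
    exact adj_apply_eq_zero_or_one c a b
  have hdisj : ∀ M ∈ basisMatrices A, ∀ N ∈ basisMatrices A, M ≠ N →
      ∀ a b, M a b = 0 ∨ N a b = 0 := by
    intro M hM N hN hMN a b
    obtain ⟨c, hc, rfl⟩ := mem_basisMatrices.1 hM
    obtain ⟨d, hd, rfl⟩ := mem_basisMatrices.1 hN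
    by_cases hac : (a, b) ∈ c
    · by_cases had : (a, b) ∈ d
      · exact absurd (congrArg (adj F) (hc.eq_of_inter_nonempty hA hd ⟨_, hac, had⟩)) hMN
      · simp [adj_apply, had]
    · simp [adj_apply, hac]
  refine ⟨h01, hdisj, linearIndependent_of_disjoint hdisj fun M hM => ?_, span_basisMatrices hA⟩
  obtain ⟨c, hc, rfl⟩ := mem_basisMatrices.1 hM
  obtain ⟨⟨a, b⟩, hab⟩ := hc.1.1
  exact ⟨a, b, adj_apply_eq_one_iff.2 hab⟩

lemma mem_basisMatrices_of_goodBasis {B : Finset (Matrix Ω Ω F)} (hB : GoodBasis A B)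
    {M : Matrix Ω Ω F} (hM : M ∈ B) : M ∈ basisMatrices A := by
  obtain ⟨h01, hdisj, hli, hspan⟩ := hB
  have hMA : M ∈ A := hspan ▸ Submodule.subset_span hM
  have hMc := eq_adj_of_zero_or_one (h01 M hM)
  set c := {p : Ω × Ω | M p.1 p.2 = 1}
  refine mem_basisMatrices.2 ⟨c, ⟨⟨?_, hMc ▸ hMA⟩, fun d hd hdc ⟨a, b⟩ hab => ?_⟩, hMc.symm⟩
  · refine Set.nonempty_iff_ne_empty.2 fun h => hli.ne_zero ⟨M, hM⟩ ?_
    show M = 0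
    rw [hMc, h, adj_empty]
  · -- an element of `A` is constant on the support of each element of `B`
    obtain ⟨f, -, hf⟩ := Submodule.mem_span_finset.1 (hspan ▸ hd.2)
    have hconst : ∀ a b, (a, b) ∈ c → adj F d a b = f M := fun a b hab => by
      rw [← hf, sum_smul_apply_of_disjoint hdisj f hM hab]
    obtain ⟨⟨a', b'⟩, hab'⟩ := hd.1
    rw [← adj_apply_eq_one_iff (F := F), hconst a b hab, ← hconst a' b' (hdc hab')]
    exact adj_apply_eq_one_iff.2 hab'

lemma eq_basisMatrices_of_goodBasis (hA : HadamardClosed A) {B : Finset (Matrix Ω Ω F)}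
    (hB : GoodBasis A B) : B = basisMatrices A := by
  refine Finset.Subset.antisymm (fun M hM => mem_basisMatrices_of_goodBasis hB hM) fun M hM => ?_
  obtain ⟨c, hc, rfl⟩ := mem_basisMatrices.1 hM
  obtain ⟨⟨a, b⟩, hab⟩ := hc.1.1
  obtain ⟨f, -, hf⟩ := Submodule.mem_span_finset.1 (hB.2.2.2 ▸ hc.1.2)
  have hsum : (∑ N ∈ B, f N • N) a b ≠ 0 := by
    rw [hf, adj_apply_eq_one_iff.2 hab]
    exact one_ne_zero
  rw [Matrix.sum_apply] at hsum
  obtain ⟨N, hN, hNab⟩ := Finset.exists_ne_zero_of_sum_ne_zero hsum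
  obtain ⟨d, hd, rfl⟩ := mem_basisMatrices.1 (mem_basisMatrices_of_goodBasis hB hN)
  have habd : (a, b) ∈ d := by
    by_contra h
    simp [adj_apply, h] at hNab
  rwa [hc.eq_of_inter_nonempty hA hd ⟨_, hab, habd⟩]

lemma transpose_mem_basisMatrices (hT : ∀ x ∈ A, xᵀ ∈ A) {M : Matrix Ω Ω F}
    (hM : M ∈ basisMatrices A) : Mᵀ ∈ basisMatrices A := by
  obtain ⟨c, hc, rfl⟩ := mem_basisMatrices.1 hM
  exact mem_basisMatrices.2 ⟨_, hc.transposeRel hT, adj_transposeRel c⟩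

end HadamardClosed

theorem statement0_general {F : Type*} [Field F]
    {Ω : Type*} [Fintype Ω] [DecidableEq Ω]
    (A : Submodule F (Matrix Ω Ω F))
    (hHad : ∀ x ∈ A, ∀ y ∈ A, Matrix.hadamard x y ∈ A) :
    ∃ B : Finset (Matrix Ω Ω F),
      GoodBasis A B ∧
      (∀ B' : Finset (Matrix Ω Ω F), GoodBasis A B' → B' = B) ∧
      ((1 : Matrix Ω Ω F) ∈ A → ∃ S : Finset (Matrix Ω Ω F), S ⊆ B ∧
        (1 : Matrix Ω Ω F) = ∑ M ∈ S, M) ∧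
      ((allOnes F : Matrix Ω Ω F) ∈ A → ∑ M ∈ B, M = (allOnes F : Matrix Ω Ω F)) ∧
      ((∀ x ∈ A, xᵀ ∈ A) → ∀ M ∈ B, Mᵀ ∈ B) := by
  refine ⟨basisMatrices A, goodBasis_basisMatrices hHad,
    fun B' hB' => eq_basisMatrices_of_goodBasis hHad hB', fun h1 => ?_, fun hJ => ?_,
    fun hT M hM => transpose_mem_basisMatrices hT hM⟩
  · rw [← adj_diagRel] at h1 ⊢
    refine ⟨((basisRels A).filter (· ⊆ diagRel Set.univ)).image (adj F),
      Finset.image_subset_image (Finset.filter_subset _ _), ?_⟩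
    rw [sum_image_adj, ← adj_eq_sum_basisRels hHad h1]
  · rw [← adj_univ] at hJ ⊢
    rw [adj_eq_sum_basisRels hHad hJ, basisMatrices, sum_image_adj]
    simp

theorem statement0 {F : Type*} [Field F] (hchar : ringChar F ≠ 2)
    {Ω : Type*} [Fintype Ω] [DecidableEq Ω] [Nonempty Ω]
    (A : Submodule F (Matrix Ω Ω F))
    (hHad : ∀ x ∈ A, ∀ y ∈ A, Matrix.hadamard x y ∈ A) :
    ∃ B : Finset (Matrix Ω Ω F),
      GoodBasis A B ∧
      (∀ B' : Finset (Matrix Ω Ω F), GoodBasis A B' → B' = B) ∧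
      ((1 : Matrix Ω Ω F) ∈ A → ∃ S : Finset (Matrix Ω Ω F), S ⊆ B ∧
        (1 : Matrix Ω Ω F) = ∑ M ∈ S, M) ∧
      ((allOnes F : Matrix Ω Ω F) ∈ A → ∑ M ∈ B, M = (allOnes F : Matrix Ω Ω F)) ∧
      ((∀ x ∈ A, xᵀ ∈ A) → ∀ M ∈ B, Mᵀ ∈ B) :=
  statement0_general A hHad

end JordanPaper

end
end

section
/- Let F be a field with char F ≠ 2, Ω a nonempty finite set, and A ⊆ M_Ω(F) a linear subspace which contains I_Ω and J_Ω and is closed under transposition and under the Hadamard product. Then there exists a unique partition C = {C_1,...,C_r} of Ω×Ω such that A equals the linear span of the adjacency matrices of C_1,...,C_r. Moreover this partition is a rainbow: the diagonal relation 1_Ω = {(ω,ω) : ω ∈ Ω} is a union of classes of C, and {C_1^T,...,C_r^T} = {C_1,...,C_r}. -/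
open Matrix

noncomputable section

namespace JordanPaper

open scoped Classical

variable {Ω : Type*}

/-!
Call two positions `p, q ∈ Ω × Ω` equivalent when every matrix of `A` has the same entry at `p`
and at `q`; the classes of this relation are the partition. Since `A` contains `J` and is closed
under the Hadamard product, it is a unital subalgebra of the algebra of functions `Ω × Ω → F`
under pointwise multiplication. On a finite set such an algebra contains the indicator of every
class of points it does not separate: multiply, over the points `q` outside the class, elements
normalised to be `1` on the class and `0` at `q`. Hence the adjacency matrices of the classes lie
in `A` and, as every element of `A` is constant on classes, they span `A`. Conversely, the blocks
of any partition whose adjacency matrices span `A` are exactly these classes. The diagonal is a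
union of classes because `I ∈ A`, and transposition permutes the classes because `Aᵀ = A`.
-/

theorem _root_.Subalgebra.indicator_setOf_forall_eq_mem {X F : Type*} [Finite X] [Field F]
    (S : Subalgebra F (X → F)) (x : X) :
    Set.indicator {y | ∀ f ∈ S, f y = f x} 1 ∈ S := by
  have hsep : ∀ y, ∃ g ∈ S, g x = 1 ∧ ((∀ f ∈ S, f y = f x) ∨ g y = 0) := by
    intro y
    by_cases hy : ∀ f ∈ S, f y = f x
    · exact ⟨1, S.one_mem, rfl, Or.inl hy⟩
    push Not at hy
    obtain ⟨f, hfS, hfy⟩ := hy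
    refine ⟨(f x - f y)⁻¹ • (f - algebraMap F _ (f y)),
      S.smul_mem (S.sub_mem hfS (S.algebraMap_mem _)) _, ?_, Or.inr ?_⟩
    · simp [inv_mul_cancel₀ (sub_ne_zero.2 hfy.symm)]
    · simp
  choose g hgS hgx hgy using hsep
  have := Fintype.ofFinite X
  convert S.prod_mem (fun y (_ : y ∈ Finset.univ) => hgS y) using 1
  ext z
  rw [Finset.prod_apply]
  by_cases hz : ∀ f ∈ S, f z = f x
  · rw [Set.indicator_of_mem (s := {y | ∀ f ∈ S, f y = f x}) hz,
      Finset.prod_eq_one fun y _ => (hz _ (hgS y)).trans (hgx y)]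
    rfl
  · rw [Set.indicator_of_notMem (s := {y | ∀ f ∈ S, f y = f x}) hz]
    exact (Finset.prod_eq_zero (f := fun y => g y z) (Finset.mem_univ z)
      ((hgy z).resolve_left hz)).symm

theorem isPartition_iff_setoid_isPartition {Ω : Type*} (P : Set (Set (Ω × Ω))) :
    IsPartition P ↔ Setoid.IsPartition P := by
  constructor
  · rintro ⟨hne, hdisj, hunion⟩
    refine Set.PairwiseDisjoint.isPartition_of_exists_of_ne_empty ?_ ?_ ?_
    · exact fun c hc d hd hcd => Set.disjoint_iff_inter_eq_empty.2 (hdisj c hc d hd hcd)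
    · exact fun p => Set.mem_sUnion.1 (hunion ▸ Set.mem_univ p)
    · exact fun h => (hne ∅ h).ne_empty rfl
  · intro hP
    exact ⟨fun c => Setoid.nonempty_of_mem_partition hP,
      fun c hc d hd hcd => Set.disjoint_iff_inter_eq_empty.1 (hP.pairwiseDisjoint hc hd hcd),
      hP.sUnion_eq_univ⟩

theorem _root_.Setoid.IsPartition.eq_classes {α : Type*} {Q : Set (Set α)}
    (hQ : Setoid.IsPartition Q) (r : Setoid α) (hr : ∀ a b, r a b ↔ ∃ c ∈ Q, a ∈ c ∧ b ∈ c) :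
    Q = r.classes := by
  rw [← Setoid.classes_mkClasses Q hQ]
  congr 1
  ext a b
  rw [Setoid.rel_iff_exists_classes, Setoid.classes_mkClasses Q hQ, hr]

theorem adj_apply_eq_of_mem_block {F : Type*} [Zero F] [One F] {Ω : Type*}
    {Q : Set (Set (Ω × Ω))} (hQ : Setoid.IsPartition Q) {c d : Set (Ω × Ω)} (hc : c ∈ Q)
    (hd : d ∈ Q) {p q : Ω × Ω} (hp : p ∈ c) (hq : q ∈ c) :
    adj F d p.1 p.2 = adj F d q.1 q.2 := by
  have hpq : p ∈ d ↔ q ∈ d :=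
    ⟨fun h => Setoid.eq_of_mem_eqv_class hQ.2 hc hp hd h ▸ hq,
      fun h => Setoid.eq_of_mem_eqv_class hQ.2 hc hq hd h ▸ hp⟩
  simp [adj, hpq]

theorem mem_span_adj_classes {F : Type*} [Field F] {Ω : Type*} [Fintype Ω]
    (r : Setoid (Ω × Ω)) {x : Matrix Ω Ω F} (hx : ∀ p q, r p q → x p.1 p.2 = x q.1 q.2) :
    x ∈ Submodule.span F (adj F '' r.classes) := by
  have hsum : x = ∑ k : Quotient r, x k.out.1 k.out.2 • adj F {y | r y k.out} := by
    ext a b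
    rw [Matrix.sum_apply, Finset.sum_eq_single (⟦(a, b)⟧ : Quotient r)]
    · simp [adj, hx _ _ (Quotient.mk_out (a, b)), r.symm (Quotient.mk_out (a, b))]
    · intro k _ hk
      simp [adj, ← Quotient.mk_eq_iff_out, Ne.symm hk]
    · simp
  rw [hsum]
  exact Submodule.sum_mem _ fun k _ =>
    Submodule.smul_mem _ _ (Submodule.subset_span ⟨_, r.mem_classes k.out, rfl⟩)

section AgreeSetoid

variable {F : Type*} [Field F] {Ω : Type*} (A : Submodule F (Matrix Ω Ω F))

def agreeSetoid : Setoid (Ω × Ω) where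
  r p q := ∀ x ∈ A, x p.1 p.2 = x q.1 q.2
  iseqv := ⟨fun _ _ _ => rfl, fun h x hx => (h x hx).symm,
    fun h h' x hx => (h x hx).trans (h' x hx)⟩

theorem agreeSetoid_iff {p q : Ω × Ω} :
    agreeSetoid A p q ↔ ∀ x ∈ A, x p.1 p.2 = x q.1 q.2 := Iff.rfl

def hadamardSubalgebra (hJ : allOnes F ∈ A) (hHad : ∀ x ∈ A, ∀ y ∈ A, x ⊙ y ∈ A) :
    Subalgebra F (Ω × Ω → F) where
  carrier := {f | Matrix.of (Function.curry f) ∈ A}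
  mul_mem' hf hg := hHad _ hf _ hg
  add_mem' hf hg := A.add_mem hf hg
  algebraMap_mem' c := by
    show Matrix.of _ ∈ A
    convert A.smul_mem c hJ using 1
    ext
    simp [allOnes, Algebra.algebraMap_eq_smul_one]

theorem adj_classes_mem [Fintype Ω] (hJ : allOnes F ∈ A)
    (hHad : ∀ x ∈ A, ∀ y ∈ A, x ⊙ y ∈ A) {c : Set (Ω × Ω)}
    (hc : c ∈ (agreeSetoid A).classes) : adj F c ∈ A := by
  obtain ⟨p, rfl⟩ := hc
  have h := (hadamardSubalgebra A hJ hHad).indicator_setOf_forall_eq_mem p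
  have hcls : {y | ∀ f ∈ hadamardSubalgebra A hJ hHad, f y = f p} = {y | agreeSetoid A y p} :=
    Set.ext fun y => ⟨fun hy x hx => hy (Function.uncurry x) hx,
      fun hy f hf => (agreeSetoid_iff A).1 hy (Matrix.of (Function.curry f)) hf⟩
  have hadj : adj F {y | agreeSetoid A y p} =
      Matrix.of (Function.curry (Set.indicator {y | agreeSetoid A y p} 1)) := by
    ext a b
    simp [adj, Set.indicator_apply]
  rw [hcls] at h
  rwa [hadj]

theorem span_adj_classes_eq [Fintype Ω] (hJ : allOnes F ∈ A)
    (hHad : ∀ x ∈ A, ∀ y ∈ A, x ⊙ y ∈ A) :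
    A = Submodule.span F (adj F '' (agreeSetoid A).classes) := by
  refine le_antisymm
    (fun x hx => mem_span_adj_classes _ fun p q h => (agreeSetoid_iff A).1 h x hx) ?_
  rw [Submodule.span_le]
  rintro _ ⟨c, hc, rfl⟩
  exact adj_classes_mem A hJ hHad hc

theorem eq_agreeSetoid_classes {Q : Set (Set (Ω × Ω))} (hQ : Setoid.IsPartition Q)
    (hspan : A = Submodule.span F (adj F '' Q)) : Q = (agreeSetoid A).classes := by
  refine hQ.eq_classes _ fun p q => ⟨fun hpq => ?_, fun ⟨c, hc, hp, hq⟩ => ?_⟩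
  · obtain ⟨c, hc, hp⟩ := Set.mem_sUnion.1 (hQ.sUnion_eq_univ ▸ Set.mem_univ p)
    have hadj : adj F c p.1 p.2 = adj F c q.1 q.2 :=
      hpq _ (hspan ▸ Submodule.subset_span ⟨c, hc, rfl⟩)
    refine ⟨c, hc, hp, by_contra fun hq => ?_⟩
    simp [adj, hp, hq] at hadj
  · intro x hx
    rw [hspan] at hx
    have hle : Submodule.span F (adj F '' Q) ≤
        LinearMap.ker (entryLinearMap F F p.1 p.2 - entryLinearMap F F q.1 q.2) := by
      rw [Submodule.span_le]
      rintro _ ⟨d, hd, rfl⟩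
      simpa [sub_eq_zero] using adj_apply_eq_of_mem_block hQ hc hd hp hq
    simpa [sub_eq_zero] using hle hx

theorem agreeSetoid_classes_subset_diag [DecidableEq Ω] (hI : (1 : Matrix Ω Ω F) ∈ A)
    {c : Set (Ω × Ω)} (hc : c ∈ (agreeSetoid A).classes)
    (hdiag : (c ∩ diagRel (Set.univ : Set Ω)).Nonempty) : c ⊆ diagRel (Set.univ : Set Ω) := by
  obtain ⟨p, rfl⟩ := hc
  obtain ⟨z, hzp, hz, -⟩ := hdiag
  intro w hwp
  have h1 := (agreeSetoid_iff A).1 ((agreeSetoid A).trans hwp ((agreeSetoid A).symm hzp))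
    (1 : Matrix Ω Ω F) hI
  rw [hz, Matrix.one_apply_eq] at h1
  exact ⟨by_contra fun hw => by simp [Matrix.one_apply_ne hw] at h1, trivial⟩

theorem agreeSetoid_swap (hT : ∀ x ∈ A, xᵀ ∈ A) {p q : Ω × Ω} (h : agreeSetoid A p q) :
    agreeSetoid A p.swap q.swap :=
  fun x hx => h xᵀ (hT x hx)

theorem transposeRel_mem_agreeSetoid_classes (hT : ∀ x ∈ A, xᵀ ∈ A) {c : Set (Ω × Ω)}
    (hc : c ∈ (agreeSetoid A).classes) : transposeRel c ∈ (agreeSetoid A).classes := by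
  obtain ⟨p, rfl⟩ := hc
  refine ⟨p.swap, Set.ext fun q => ?_⟩
  show agreeSetoid A q.swap p ↔ agreeSetoid A q p.swap
  exact ⟨fun h => by simpa using agreeSetoid_swap A hT h,
    fun h => by simpa using agreeSetoid_swap A hT h⟩

end AgreeSetoid

theorem statement1_general {F : Type*} [Field F]
    {Ω : Type*} [Fintype Ω] [DecidableEq Ω]
    (A : Submodule F (Matrix Ω Ω F))
    (hI : (1 : Matrix Ω Ω F) ∈ A) (hJ : (allOnes F : Matrix Ω Ω F) ∈ A)
    (hT : ∀ x ∈ A, xᵀ ∈ A)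
    (hHad : ∀ x ∈ A, ∀ y ∈ A, Matrix.hadamard x y ∈ A) :
    ∃ P : Set (Set (Ω × Ω)),
      IsPartition P ∧
      A = Submodule.span F (adj F '' P) ∧
      (∀ Q : Set (Set (Ω × Ω)), IsPartition Q → A = Submodule.span F (adj F '' Q) → Q = P) ∧
      (∀ c ∈ P, (c ∩ diagRel (Set.univ : Set Ω)).Nonempty → c ⊆ diagRel (Set.univ : Set Ω)) ∧
      (∀ c ∈ P, transposeRel c ∈ P) := by
  refine ⟨(agreeSetoid A).classes,
    (isPartition_iff_setoid_isPartition _).2 (Setoid.isPartition_classes _),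
    span_adj_classes_eq A hJ hHad, fun Q hQ hspan => ?_,
    fun c hc => agreeSetoid_classes_subset_diag A hI hc,
    fun c hc => transposeRel_mem_agreeSetoid_classes A hT hc⟩
  exact eq_agreeSetoid_classes A ((isPartition_iff_setoid_isPartition Q).1 hQ) hspan

theorem statement1 {F : Type*} [Field F] (hchar : ringChar F ≠ 2)
    {Ω : Type*} [Fintype Ω] [DecidableEq Ω] [Nonempty Ω]
    (A : Submodule F (Matrix Ω Ω F))
    (hI : (1 : Matrix Ω Ω F) ∈ A) (hJ : (allOnes F : Matrix Ω Ω F) ∈ A)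
    (hT : ∀ x ∈ A, xᵀ ∈ A)
    (hHad : ∀ x ∈ A, ∀ y ∈ A, Matrix.hadamard x y ∈ A) :
    ∃ P : Set (Set (Ω × Ω)),
      IsPartition P ∧
      A = Submodule.span F (adj F '' P) ∧
      (∀ Q : Set (Set (Ω × Ω)), IsPartition Q → A = Submodule.span F (adj F '' Q) → Q = P) ∧
      (∀ c ∈ P, (c ∩ diagRel (Set.univ : Set Ω)).Nonempty → c ⊆ diagRel (Set.univ : Set Ω)) ∧
      (∀ c ∈ P, transposeRel c ∈ P) :=
  statement1_general A hI hJ hT hHad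

end JordanPaper

end
end

section
/- Let F be a field of characteristic 0, Ω a nonempty finite set, and A ⊆ M_Ω(F) a coherent J-algebra. Then there exists a unique partition C of Ω×Ω such that the adjacency matrices of the classes of C form a basis of A, and this partition is a Jordan configuration: it is a rainbow, and for all classes C, D ∈ C and all pairs (α,β), (α',β') lying in the same class of C one has |C(α)∩D^T(β)| + |D(α)∩C^T(β)| = |C(α')∩D^T(β')| + |D(α')∩C^T(β')|, where C(α) := {β : (α,β) ∈ C}. -/
open Matrix

noncomputable section

namespace JordanPaper

open scoped Classical

variable {Ω : Type*}

/-!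
The classes are those of the equivalence "every matrix of `A` takes the same value at `p` and
at `q`". As `A` contains `J` and is closed under Hadamard products, Lagrange interpolation puts
the 0-1 indicator of every level set of a matrix of `A`, hence of every class, into `A`. Each
matrix of `A` is constant on the classes, so their adjacency matrices form a basis, and a
partition with this property must consist of exactly these classes. `I ∈ A` and closure under
transposition give a rainbow, and the `(α, β)` entry of `2 (C ★ D) = C D + D C` for two basis
matrices is the symmetrised intersection number, which is therefore constant on each class.
-/

section Partition

variable {P Q : Set (Set (Ω × Ω))}

theorem IsPartition.notMem_of_ne (hP : IsPartition P) {c d : Set (Ω × Ω)} (hc : c ∈ P)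
    (hd : d ∈ P) (hcd : c ≠ d) {p : Ω × Ω} (hpc : p ∈ c) : p ∉ d := fun hpd =>
  (Set.eq_empty_iff_forall_notMem.1 (hP.2.1 c hc d hd hcd)) p ⟨hpc, hpd⟩

theorem IsPartition.eq_of_mem_of_mem (hP : IsPartition P) {c d : Set (Ω × Ω)} (hc : c ∈ P)
    (hd : d ∈ P) {p : Ω × Ω} (hpc : p ∈ c) (hpd : p ∈ d) : c = d := by
  by_contra hcd
  exact hP.notMem_of_ne hc hd hcd hpc hpd

theorem IsPartition.exists_mem (hP : IsPartition P) (p : Ω × Ω) : ∃ c ∈ P, p ∈ c :=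
  Set.mem_sUnion.1 (hP.2.2 ▸ Set.mem_univ p)

theorem IsPartition.eq_of_subset (hP : IsPartition P) (hQ : IsPartition Q) (hQP : Q ⊆ P) :
    Q = P := by
  refine hQP.antisymm fun c hc => ?_
  obtain ⟨p, hp⟩ := hP.1 c hc
  obtain ⟨d, hd, hpd⟩ := hQ.exists_mem p
  rwa [hP.eq_of_mem_of_mem hc (hQP hd) hp hpd]

end Partition

section Adjacency

variable {F : Type*} [Field F] {P : Set (Set (Ω × Ω))}

theorem adj_apply_of_mem {c : Set (Ω × Ω)} {p : Ω × Ω} (hp : p ∈ c) : adj F c p.1 p.2 = 1 :=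
  if_pos hp

theorem adj_apply_of_notMem {c : Set (Ω × Ω)} {p : Ω × Ω} (hp : p ∉ c) :
    adj F c p.1 p.2 = 0 :=
  if_neg hp

theorem linearIndependent_adj (hP : IsPartition P) :
    LinearIndependent F (fun c : P => adj F (c : Set (Ω × Ω))) := by
  rw [linearIndependent_iff']
  intro s g hsum c hc
  obtain ⟨p, hp⟩ := hP.1 c c.2
  have hentry := congr_fun (congr_fun hsum p.1) p.2
  rw [Matrix.sum_apply, Finset.sum_eq_single c] at hentry
  · simpa [adj_apply_of_mem hp] using hentry
  · intro d _ hdc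
    have hpd := hP.notMem_of_ne c.2 d.2 (fun h => hdc (Subtype.ext h).symm) hp
    simp [adj_apply_of_notMem hpd]
  · exact absurd hc

theorem mem_span_adj_iff [Fintype Ω] (hP : IsPartition P) {x : Matrix Ω Ω F} :
    x ∈ Submodule.span F (adj F '' P) ↔
      ∀ c ∈ P, ∀ p ∈ c, ∀ q ∈ c, x p.1 p.2 = x q.1 q.2 := by
  constructor
  · intro hx c hc p hp q hq
    induction hx using Submodule.span_induction with
    | mem _ hy =>
      obtain ⟨d, hd, rfl⟩ := hy
      by_cases hcd : c = d
      · subst hcd; rw [adj_apply_of_mem hp, adj_apply_of_mem hq]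
      · rw [adj_apply_of_notMem (hP.notMem_of_ne hc hd hcd hp),
          adj_apply_of_notMem (hP.notMem_of_ne hc hd hcd hq)]
    | zero => rfl
    | add _ _ _ _ hy hz => simp only [Matrix.add_apply, hy, hz]
    | smul _ _ _ hy => simp only [Matrix.smul_apply, hy]
  · intro hx
    let value : Set (Ω × Ω) → F := fun c => if h : c.Nonempty then x h.some.1 h.some.2 else 0
    have hsum : ∑ c ∈ (Set.toFinite P).toFinset, value c • adj F c = x := by
      ext a b
      obtain ⟨c, hc, hab⟩ := hP.exists_mem (a, b)
      rw [Matrix.sum_apply, Finset.sum_eq_single c]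
      · have hne : c.Nonempty := ⟨_, hab⟩
        simp only [Matrix.smul_apply, adj_apply_of_mem hab, smul_eq_mul, mul_one, value,
          dif_pos hne]
        exact hx c hc _ hne.some_mem _ hab
      · intro d hd hdc
        have hab' := hP.notMem_of_ne hc ((Set.toFinite P).mem_toFinset.1 hd) (Ne.symm hdc) hab
        simp [adj_apply_of_notMem hab']
      · exact absurd ((Set.toFinite P).mem_toFinset.2 hc)
    rw [← hsum]
    exact Submodule.sum_mem _ fun c hc =>
      Submodule.smul_mem _ _ (Submodule.subset_span ⟨c, (Set.toFinite P).mem_toFinset.1 hc, rfl⟩)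

end Adjacency

section Agreement

variable {F : Type*} [Field F]

def agreeClass (A : Submodule F (Matrix Ω Ω F)) (p : Ω × Ω) : Set (Ω × Ω) :=
  {q | ∀ x ∈ A, x q.1 q.2 = x p.1 p.2}

def agreePartition (A : Submodule F (Matrix Ω Ω F)) : Set (Set (Ω × Ω)) :=
  Set.range (agreeClass A)

variable {A : Submodule F (Matrix Ω Ω F)}

theorem mem_agreeClass_self (p : Ω × Ω) : p ∈ agreeClass A p := fun _ _ => rfl

theorem agreeClass_eq_of_mem {p q : Ω × Ω} (hq : q ∈ agreeClass A p) :
    agreeClass A q = agreeClass A p := by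
  ext r
  exact ⟨fun hr x hx => (hr x hx).trans (hq x hx), fun hr x hx => (hr x hx).trans (hq x hx).symm⟩

theorem isPartition_agreePartition (A : Submodule F (Matrix Ω Ω F)) :
    IsPartition (agreePartition A) := by
  refine ⟨?_, ?_, ?_⟩
  · rintro _ ⟨p, rfl⟩
    exact ⟨p, mem_agreeClass_self p⟩
  · rintro _ ⟨p, rfl⟩ _ ⟨q, rfl⟩ hpq
    refine Set.eq_empty_iff_forall_notMem.2 fun r ⟨hrp, hrq⟩ => hpq ?_
    rw [← agreeClass_eq_of_mem hrp, agreeClass_eq_of_mem hrq]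
  · exact Set.eq_univ_of_forall fun p => ⟨_, ⟨p, rfl⟩, mem_agreeClass_self p⟩

theorem mem_agreeClass_iff_of_span_eq {S : Set (Matrix Ω Ω F)} (hS : Submodule.span F S = A)
    {p q : Ω × Ω} : q ∈ agreeClass A p ↔ ∀ x ∈ S, x q.1 q.2 = x p.1 p.2 := by
  refine ⟨fun hq x hx => hq x (hS ▸ Submodule.subset_span hx), fun hq x hx => ?_⟩
  rw [← hS] at hx
  induction hx using Submodule.span_induction with
  | mem y hy => exact hq y hy
  | zero => rfl
  | add _ _ _ _ hy hz => simp only [Matrix.add_apply, hy, hz]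
  | smul _ _ _ hy => simp only [Matrix.smul_apply, hy]

end Agreement

section HadamardClosed

variable {F : Type*} [Field F] {A : Submodule F (Matrix Ω Ω F)}
  (hJ : allOnes F ∈ A) (hH : ∀ x ∈ A, ∀ y ∈ A, Matrix.hadamard x y ∈ A)
include hJ hH

theorem of_prod_mem {ι : Type*} (T : Finset ι) {g : ι → Matrix Ω Ω F}
    (hg : ∀ i ∈ T, g i ∈ A) : Matrix.of (fun a b => ∏ i ∈ T, g i a b) ∈ A := by
  induction T using Finset.induction_on with
  | empty => simpa [allOnes] using hJ
  | insert j T hj ih =>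
    have hprod :=
      hH _ (hg j (T.mem_insert_self j)) _ (ih fun i hi => hg i (T.mem_insert_of_mem hi))
    simpa [Matrix.hadamard, Finset.prod_insert hj] using hprod

/-- Lagrange interpolation: the level set `{x = v}` is cut out by `∏_{w ≠ v} (x - w) / (v - w)`,
`w` ranging over the entries of `x`. -/
theorem of_ite_eq_mem [Fintype Ω] {x : Matrix Ω Ω F} (hx : x ∈ A) (v : F) :
    Matrix.of (fun a b => if x a b = v then (1 : F) else 0) ∈ A := by
  let values := (Finset.univ.image fun p : Ω × Ω => x p.1 p.2).erase v
  convert of_prod_mem hJ hH values (g := fun w => (v - w)⁻¹ • (x - w • allOnes F))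
    (fun w _ => A.smul_mem _ (A.sub_mem hx (A.smul_mem _ hJ))) using 1
  ext a b
  simp only [Matrix.of_apply, Matrix.smul_apply, Matrix.sub_apply, allOnes, smul_eq_mul, mul_one]
  split_ifs with hab
  · refine (Finset.prod_eq_one fun w hw => ?_).symm
    rw [hab, inv_mul_cancel₀ (sub_ne_zero.2 (Finset.ne_of_mem_erase hw).symm)]
  · refine (Finset.prod_eq_zero (i := x a b) ?_ (by simp)).symm
    exact Finset.mem_erase.2 ⟨hab, Finset.mem_image.2 ⟨(a, b), Finset.mem_univ _, rfl⟩⟩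

theorem adj_agreeClass_mem [Fintype Ω] (p : Ω × Ω) : adj F (agreeClass A p) ∈ A := by
  obtain ⟨S, hS⟩ := IsNoetherian.noetherian A
  convert of_prod_mem hJ hH S (g := fun x => Matrix.of fun a b =>
      if x a b = x p.1 p.2 then (1 : F) else 0)
    (fun x hx => of_ite_eq_mem hJ hH (hS ▸ Submodule.subset_span hx) _) using 1
  ext a b
  simp only [adj, Matrix.of_apply, Finset.prod_boole]
  exact if_congr (mem_agreeClass_iff_of_span_eq hS) rfl rfl

theorem span_adj_agreePartition [Fintype Ω] :
    Submodule.span F (adj F '' agreePartition A) = A := by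
  refine le_antisymm (Submodule.span_le.2 ?_) fun x hx => ?_
  · rintro _ ⟨_, ⟨p, rfl⟩, rfl⟩
    exact adj_agreeClass_mem hJ hH p
  · rw [mem_span_adj_iff (isPartition_agreePartition A)]
    rintro _ ⟨r, rfl⟩ p hp q hq
    rw [hp x hx, hq x hx]

end HadamardClosed

section Configuration

variable {F : Type*} [Field F] {A : Submodule F (Matrix Ω Ω F)}

theorem eq_agreePartition_of_span_adj_eq [Fintype Ω] {Q : Set (Set (Ω × Ω))}
    (hQ : IsPartition Q) (hQA : Submodule.span F (adj F '' Q) = A) : Q = agreePartition A := by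
  refine (isPartition_agreePartition A).eq_of_subset hQ fun c hc => ?_
  obtain ⟨p, hp⟩ := hQ.1 c hc
  refine ⟨p, Set.Subset.antisymm (fun q hq => ?_) fun q hq x hx => ?_⟩
  · have hadj : adj F c ∈ A := hQA ▸ Submodule.subset_span ⟨c, hc, rfl⟩
    by_contra hqc
    have h := hq _ hadj
    rw [adj_apply_of_notMem hqc, adj_apply_of_mem hp] at h
    exact zero_ne_one h
  · exact (mem_span_adj_iff hQ).1 (hQA ▸ hx) c hc q hq p hp

theorem transposeRel_agreeClass (hT : ∀ x ∈ A, xᵀ ∈ A) (p : Ω × Ω) :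
    transposeRel (agreeClass A p) = agreeClass A p.swap := by
  ext q
  exact ⟨fun hq x hx => by simpa using hq xᵀ (hT x hx),
    fun hq x hx => by simpa using hq xᵀ (hT x hx)⟩

theorem isRainbow_agreePartition [DecidableEq Ω] (hI : (1 : Matrix Ω Ω F) ∈ A)
    (hT : ∀ x ∈ A, xᵀ ∈ A) : IsRainbow (agreePartition A) := by
  refine ⟨isPartition_agreePartition A, ?_, ?_⟩
  · rintro _ ⟨p, rfl⟩ ⟨r, hr, hr_diag, -⟩ q hq
    have h : (1 : Matrix Ω Ω F) q.1 q.2 = 1 := by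
      rw [hq 1 hI, ← hr 1 hI, hr_diag, Matrix.one_apply_eq]
    refine ⟨?_, Set.mem_univ _⟩
    by_contra hne
    rw [Matrix.one_apply_ne hne] at h
    exact zero_ne_one h
  · rintro _ ⟨p, rfl⟩
    exact ⟨p.swap, (transposeRel_agreeClass hT p).symm⟩

theorem adj_mul_adj_apply [Fintype Ω] (c d : Set (Ω × Ω)) (α β : Ω) :
    (adj F c * adj F d) α β = cnum c d α β := by
  have hterm : ∀ γ, adj F c α γ * adj F d γ β =
      if γ ∈ outSet c α ∩ outSet (transposeRel d) β then 1 else 0 := fun γ => by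
    simp only [adj, Matrix.of_apply, ite_zero_mul_ite_zero, one_mul]
    rfl
  rw [Matrix.mul_apply, Finset.sum_congr rfl fun γ _ => hterm γ, Finset.sum_boole, cnum,
    Set.ncard_eq_toFinset_card']
  congr 2
  ext γ
  simp

theorem isJordanCond_of_span_adj_eq [Fintype Ω] [CharZero F] {P : Set (Set (Ω × Ω))}
    (hP : IsPartition P) (hPA : Submodule.span F (adj F '' P) = A)
    (hjmul : ∀ x ∈ A, ∀ y ∈ A, jmul F x y ∈ A) : IsJordanCond P := by
  intro c hc d hd f hf p hp q hq
  have hA : ∀ e ∈ P, adj F e ∈ A := fun e he => hPA ▸ Submodule.subset_span ⟨e, he, rfl⟩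
  have hsym : adj F c * adj F d + adj F d * adj F c ∈ A := by
    have h := A.smul_mem (2 : F) (hjmul _ (hA c hc) _ (hA d hd))
    rwa [jmul, smul_smul, mul_inv_cancel₀ two_ne_zero, one_smul] at h
  have h := (mem_span_adj_iff hP).1 (hPA ▸ hsym) f hf p hp q hq
  simp only [Matrix.add_apply, adj_mul_adj_apply] at h
  exact_mod_cast h

end Configuration

theorem statement2_general {F : Type*} [Field F] [CharZero F]
    {Ω : Type*} [Fintype Ω] [DecidableEq Ω]
    (A : Submodule F (Matrix Ω Ω F))
    (hA : IsCoherentJAlgebra F A) :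
    ∃ P : Set (Set (Ω × Ω)),
      IsPartition P ∧
      LinearIndependent F (fun c : P => adj F (c : Set (Ω × Ω))) ∧
      Submodule.span F (adj F '' P) = A ∧
      (∀ Q : Set (Set (Ω × Ω)), IsPartition Q →
        LinearIndependent F (fun c : Q => adj F (c : Set (Ω × Ω))) →
        Submodule.span F (adj F '' Q) = A → Q = P) ∧
      IsRainbow P ∧ IsJordanCond P := by
  obtain ⟨hI, hJ, hT, hjmul, hH⟩ := hA
  have hP := isPartition_agreePartition A
  have hspan := span_adj_agreePartition hJ hH
  exact ⟨agreePartition A, hP, linearIndependent_adj hP, hspan,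
    fun Q hQ _ hQA => eq_agreePartition_of_span_adj_eq hQ hQA,
    isRainbow_agreePartition hI hT, isJordanCond_of_span_adj_eq hP hspan hjmul⟩

theorem statement2 {F : Type*} [Field F] [CharZero F]
    {Ω : Type*} [Fintype Ω] [DecidableEq Ω] [Nonempty Ω]
    (A : Submodule F (Matrix Ω Ω F))
    (hA : IsCoherentJAlgebra F A) :
    ∃ P : Set (Set (Ω × Ω)),
      IsPartition P ∧
      LinearIndependent F (fun c : P => adj F (c : Set (Ω × Ω))) ∧
      Submodule.span F (adj F '' P) = A ∧
      (∀ Q : Set (Set (Ω × Ω)), IsPartition Q →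
        LinearIndependent F (fun c : Q => adj F (c : Set (Ω × Ω))) →
        Submodule.span F (adj F '' Q) = A → Q = P) ∧
      IsRainbow P ∧ IsJordanCond P :=
  statement2_general A hA

end JordanPaper

end
end

section
/- Let F be a field with char F ≠ 2, Ω a nonempty finite set, and X ⊆ M_Ω(F) a set of symmetric matrices. Let J(X) denote the intersection of all coherent J-algebras in M_Ω(F) containing X, and WL(X) the intersection of all coherent algebras in M_Ω(F) containing X. Then J(X) = {A ∈ WL(X) : A^T = A} if and only if there exists a coherent algebra B ⊆ M_Ω(F) with J(X) = {A ∈ B : A^T = A} (i.e. if and only if J(X) is non-proper). -/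
/-! The symmetrization of a coherent algebra is a coherent J-algebra, so for symmetric `X` we
always have `J(X) ⊆ Sym WL(X)`. Conversely, if `J(X) = Sym B` for a coherent algebra `B`, then
`X ⊆ B`, hence `WL(X) ⊆ B` and `Sym WL(X) ⊆ Sym B = J(X)`. -/

open Matrix

noncomputable section

namespace JordanPaper

open scoped Classical

variable {Ω : Type*}

section Closures

variable {F : Type*} [Field F]

def symmetrization (A : Submodule F (Matrix Ω Ω F)) : Submodule F (Matrix Ω Ω F) where
  carrier := {x | x ∈ A ∧ xᵀ = x}
  add_mem' hx hy := ⟨A.add_mem hx.1 hy.1, by rw [transpose_add, hx.2, hy.2]⟩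
  zero_mem' := ⟨A.zero_mem, transpose_zero⟩
  smul_mem' c _ hx := ⟨A.smul_mem c hx.1, by rw [transpose_smul, hx.2]⟩

theorem symmetrization_mono {A B : Submodule F (Matrix Ω Ω F)} (h : A ≤ B) :
    symmetrization A ≤ symmetrization B :=
  fun _ hx => ⟨h hx.1, hx.2⟩

variable [Fintype Ω]

theorem transpose_jmul (x y : Matrix Ω Ω F) : (jmul F x y)ᵀ = jmul F xᵀ yᵀ := by
  rw [jmul, jmul, transpose_smul, transpose_add, transpose_mul, transpose_mul, add_comm]

variable [DecidableEq Ω]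

theorem IsCoherentAlgebra.jmul_mem {A : Submodule F (Matrix Ω Ω F)} (hA : IsCoherentAlgebra F A)
    {x y : Matrix Ω Ω F} (hx : x ∈ A) (hy : y ∈ A) : jmul F x y ∈ A :=
  A.smul_mem _ (A.add_mem (hA.2.2.2.1 x hx y hy) (hA.2.2.2.1 y hy x hx))

theorem IsCoherentAlgebra.isCoherentJAlgebra_symmetrization {A : Submodule F (Matrix Ω Ω F)}
    (hA : IsCoherentAlgebra F A) : IsCoherentJAlgebra F (symmetrization A) := by
  have ⟨h_one, h_allOnes, h_transpose, _, h_hadamard⟩ := hA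
  refine ⟨⟨h_one, transpose_one⟩, ⟨h_allOnes, rfl⟩, ?_, ?_, ?_⟩
  · exact fun x hx => ⟨h_transpose x hx.1, by rw [hx.2, hx.2]⟩
  · exact fun x hx y hy => ⟨hA.jmul_mem hx.1 hy.1, by rw [transpose_jmul, hx.2, hy.2]⟩
  · exact fun x hx y hy =>
      ⟨h_hadamard x hx.1 y hy.1, by rw [transpose_hadamard, hx.2, hy.2]⟩

variable (F) in
/-- `WL(X)`. -/
def coherentClosure (X : Set (Matrix Ω Ω F)) : Submodule F (Matrix Ω Ω F) :=
  sInf {A | IsCoherentAlgebra F A ∧ X ⊆ A}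

variable (F) in
/-- `J(X)`. -/
def coherentJClosure (X : Set (Matrix Ω Ω F)) : Submodule F (Matrix Ω Ω F) :=
  sInf {A | IsCoherentJAlgebra F A ∧ X ⊆ A}

variable {X : Set (Matrix Ω Ω F)}

theorem subset_coherentClosure : X ⊆ coherentClosure F X :=
  fun _ hx => Submodule.mem_sInf.2 fun _ hA => hA.2 hx

theorem subset_coherentJClosure : X ⊆ coherentJClosure F X :=
  fun _ hx => Submodule.mem_sInf.2 fun _ hA => hA.2 hx

theorem coherentClosure_le {B : Submodule F (Matrix Ω Ω F)} (hB : IsCoherentAlgebra F B)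
    (hX : X ⊆ B) : coherentClosure F X ≤ B :=
  sInf_le ⟨hB, hX⟩

theorem coherentJClosure_le {B : Submodule F (Matrix Ω Ω F)} (hB : IsCoherentJAlgebra F B)
    (hX : X ⊆ B) : coherentJClosure F X ≤ B :=
  sInf_le ⟨hB, hX⟩

theorem isCoherentAlgebra_coherentClosure (X : Set (Matrix Ω Ω F)) :
    IsCoherentAlgebra F (coherentClosure F X) := by
  have mem {x} : x ∈ coherentClosure F X ↔ ∀ A, IsCoherentAlgebra F A ∧ X ⊆ A → x ∈ A :=
    Submodule.mem_sInf
  refine ⟨mem.2 fun A hA => hA.1.1, mem.2 fun A hA => hA.1.2.1, ?_, ?_, ?_⟩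
  · exact fun x hx => mem.2 fun A hA => hA.1.2.2.1 x (mem.1 hx A hA)
  · exact fun x hx y hy => mem.2 fun A hA => hA.1.2.2.2.1 x (mem.1 hx A hA) y (mem.1 hy A hA)
  · exact fun x hx y hy => mem.2 fun A hA => hA.1.2.2.2.2 x (mem.1 hx A hA) y (mem.1 hy A hA)

theorem coherentJClosure_le_symmetrization_coherentClosure (hX : ∀ x ∈ X, xᵀ = x) :
    coherentJClosure F X ≤ symmetrization (coherentClosure F X) :=
  coherentJClosure_le (isCoherentAlgebra_coherentClosure X).isCoherentJAlgebra_symmetrization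
    fun x hx => ⟨subset_coherentClosure hx, hX x hx⟩

end Closures

theorem statement4_general {F : Type*} [Field F]
    {Ω : Type*} [Fintype Ω] [DecidableEq Ω]
    (X : Set (Matrix Ω Ω F)) (hX : ∀ x ∈ X, xᵀ = x) :
    let JX := sInf {A : Submodule F (Matrix Ω Ω F) | IsCoherentJAlgebra F A ∧ X ⊆ A}
    let WLX := sInf {A : Submodule F (Matrix Ω Ω F) | IsCoherentAlgebra F A ∧ X ⊆ A}
    ((JX : Set (Matrix Ω Ω F)) = {x | x ∈ WLX ∧ xᵀ = x} ↔
      ∃ B : Submodule F (Matrix Ω Ω F), IsCoherentAlgebra F B ∧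
        (JX : Set (Matrix Ω Ω F)) = {x | x ∈ B ∧ xᵀ = x}) := by
  intro JX WLX
  change (coherentJClosure F X : Set (Matrix Ω Ω F)) = symmetrization (coherentClosure F X) ↔
    ∃ B : Submodule F (Matrix Ω Ω F), IsCoherentAlgebra F B ∧
      (coherentJClosure F X : Set (Matrix Ω Ω F)) = symmetrization B
  simp only [SetLike.coe_set_eq]
  refine ⟨fun h => ⟨_, isCoherentAlgebra_coherentClosure X, h⟩, ?_⟩
  rintro ⟨B, hB, hJB⟩
  have hWL_le : coherentClosure F X ≤ B :=
    coherentClosure_le hB fun x hx => (hJB ▸ subset_coherentJClosure hx : x ∈ symmetrization B).1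
  exact (coherentJClosure_le_symmetrization_coherentClosure hX).antisymm
    (hJB ▸ symmetrization_mono hWL_le)

theorem statement4 {F : Type*} [Field F] (hchar : ringChar F ≠ 2)
    {Ω : Type*} [Fintype Ω] [DecidableEq Ω] [Nonempty Ω]
    (X : Set (Matrix Ω Ω F)) (hX : ∀ x ∈ X, xᵀ = x) :
    let JX := sInf {A : Submodule F (Matrix Ω Ω F) | IsCoherentJAlgebra F A ∧ X ⊆ A}
    let WLX := sInf {A : Submodule F (Matrix Ω Ω F) | IsCoherentAlgebra F A ∧ X ⊆ A}
    ((JX : Set (Matrix Ω Ω F)) = {x | x ∈ WLX ∧ xᵀ = x} ↔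
      ∃ B : Submodule F (Matrix Ω Ω F), IsCoherentAlgebra F B ∧
        (JX : Set (Matrix Ω Ω F)) = {x | x ∈ B ∧ xᵀ = x}) :=
  statement4_general X hX

end JordanPaper

end
end

section
/- Let (Ω,C) be a Jordan configuration. Then: (a) there exists a partition Ω = Ω_1 ∪ ... ∪ Ω_f into nonempty pairwise disjoint sets (the fibers) such that each diagonal relation 1_{Ω_i} = {(ω,ω) : ω ∈ Ω_i} is a class of C; (b) for every class C ∈ C there exist fibers Ω_i, Ω_j (not necessarily distinct) such that C ⊆ (Ω_i×Ω_j) ∪ (Ω_j×Ω_i), and the function ω ↦ |C(ω)| + |C^T(ω)| is constant on Ω_i and constant on Ω_j. -/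
open Matrix

noncomputable section

namespace JordanPaper

open scoped Classical

variable {Ω : Type*}

/-!
The fibers are the sets `Δ` whose diagonal `1_Δ` is a class. In the Jordan condition, the pair
`(1_Δ, c)` has intersection number `[α ∈ Δ] + [β ∈ Δ]` at an arc `(α, β)` of `c`, so the unordered
pair of fibers through the two ends is the same for every arc of `c`; this gives the inclusion
`c ⊆ Δ₁ × Δ₂ ∪ Δ₂ × Δ₁`. The pair `(c, cᵀ)` has intersection number `|c(ω)| + |cᵀ(ω)|` at a loop
`(ω, ω)`, and all loops over one fiber lie in the single class `1_Δ`.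
-/

lemma eq_and_eq_or_eq_and_eq_of_indicator_add_eq {X : Type*} [DecidableEq X] {a b a' b' : X}
    (h : ∀ x, (if a = x then 1 else 0 : ℕ) + (if b = x then 1 else 0) =
      (if a' = x then 1 else 0) + (if b' = x then 1 else 0)) :
    a = a' ∧ b = b' ∨ a = b' ∧ b = a' := by
  grind [h a, h b]

lemma mem_diagRel_self {Δ : Set Ω} {ω : Ω} : (ω, ω) ∈ diagRel Δ ↔ ω ∈ Δ := by
  simp [diagRel]

lemma diagRel_injective : Function.Injective (diagRel : Set Ω → Set (Ω × Ω)) := by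
  intro Δ Δ' h
  ext ω
  rw [← mem_diagRel_self, h, mem_diagRel_self]

lemma transposeRel_transposeRel (c : Set (Ω × Ω)) : transposeRel (transposeRel c) = c := rfl

lemma transposeRel_diagRel (Δ : Set Ω) : transposeRel (diagRel Δ) = diagRel Δ := by
  ext ⟨a, b⟩
  simp only [transposeRel, diagRel, Set.mem_ofPred_eq]
  constructor <;> rintro ⟨rfl, h⟩ <;> exact ⟨rfl, h⟩

lemma outSet_diagRel (Δ : Set Ω) (α : Ω) :
    outSet (diagRel Δ) α = if α ∈ Δ then {α} else ∅ := by
  ext γ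
  split_ifs with hα <;> simp [outSet, diagRel, eq_comm, hα]

lemma cnum_diagRel_left (Δ : Set Ω) {c : Set (Ω × Ω)} {α β : Ω} (h : (α, β) ∈ c) :
    cnum (diagRel Δ) c α β = if α ∈ Δ then 1 else 0 := by
  rw [cnum, outSet_diagRel]
  split_ifs
  · rw [Set.singleton_inter_of_mem (show α ∈ outSet (transposeRel c) β from h),
      Set.ncard_singleton]
  · rw [Set.empty_inter, Set.ncard_empty]

lemma cnum_diagRel_right (Δ : Set Ω) {c : Set (Ω × Ω)} {α β : Ω} (h : (α, β) ∈ c) :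
    cnum c (diagRel Δ) α β = if β ∈ Δ then 1 else 0 := by
  rw [cnum, transposeRel_diagRel, outSet_diagRel]
  split_ifs
  · rw [Set.inter_singleton_of_mem (show β ∈ outSet c α from h), Set.ncard_singleton]
  · rw [Set.inter_empty, Set.ncard_empty]

lemma jnum_diagRel (Δ : Set Ω) {c : Set (Ω × Ω)} {α β : Ω} (h : (α, β) ∈ c) :
    jnum (diagRel Δ) c α β = (if α ∈ Δ then 1 else 0) + (if β ∈ Δ then 1 else 0) := by
  rw [jnum, cnum_diagRel_left Δ h, cnum_diagRel_right Δ h]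

lemma jnum_transposeRel_self (c : Set (Ω × Ω)) (ω : Ω) :
    jnum c (transposeRel c) ω ω = (outSet c ω).ncard + (outSet (transposeRel c) ω).ncard := by
  rw [jnum, cnum, cnum, transposeRel_transposeRel, Set.inter_self, Set.inter_self]

def fibers (P : Set (Set (Ω × Ω))) : Set (Set Ω) := {Δ | Δ.Nonempty ∧ diagRel Δ ∈ P}

variable {P : Set (Set (Ω × Ω))}

lemma IsPartition.fibers_eq_of_mem (hP : IsPartition P) {Δ Δ' : Set Ω}
    (hΔ : Δ ∈ fibers P) (hΔ' : Δ' ∈ fibers P) {ω : Ω} (hω : ω ∈ Δ) (hω' : ω ∈ Δ') :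
    Δ = Δ' := by
  by_contra hne
  have hdisj := hP.2.1 _ hΔ.2 _ hΔ'.2 (diagRel_injective.ne hne)
  exact (Set.eq_empty_iff_forall_notMem.mp hdisj) (ω, ω)
    ⟨mem_diagRel_self.mpr hω, mem_diagRel_self.mpr hω'⟩

lemma IsRainbow.exists_mem_fibers (hP : IsRainbow P) (ω : Ω) : ∃ Δ ∈ fibers P, ω ∈ Δ := by
  obtain ⟨c, hc, hωc⟩ := Set.mem_sUnion.mp (hP.1.2.2 ▸ Set.mem_univ (ω, ω))
  have hc_diag := hP.2.1 c hc ⟨(ω, ω), hωc, rfl, Set.mem_univ ω⟩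
  have hc_eq : diagRel {x | (x, x) ∈ c} = c := by
    ext ⟨a, b⟩
    simp only [diagRel, Set.mem_ofPred_eq]
    constructor
    · rintro ⟨rfl, h⟩
      exact h
    · intro hab
      have hab' : a = b := (hc_diag hab).1
      subst hab'
      exact ⟨rfl, hab⟩
  exact ⟨{x | (x, x) ∈ c}, ⟨⟨ω, hωc⟩, by rwa [hc_eq]⟩, hωc⟩

lemma IsJordanConfig.degree_eq_of_mem_fibers (hP : IsJordanConfig P) {c : Set (Ω × Ω)}
    (hc : c ∈ P) {Δ : Set Ω} (hΔ : Δ ∈ fibers P) {ω ω' : Ω} (hω : ω ∈ Δ) (hω' : ω' ∈ Δ) :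
    (outSet c ω).ncard + (outSet (transposeRel c) ω).ncard =
      (outSet c ω').ncard + (outSet (transposeRel c) ω').ncard := by
  rw [← jnum_transposeRel_self, ← jnum_transposeRel_self]
  exact hP.2 c hc _ (hP.1.2.2 c hc) _ hΔ.2 _ (mem_diagRel_self.mpr hω) _
    (mem_diagRel_self.mpr hω')

lemma IsJordanConfig.fiber_count_eq (hP : IsJordanConfig P) {c : Set (Ω × Ω)} (hc : c ∈ P)
    {Δ : Set Ω} (hΔ : Δ ∈ fibers P) {α β α' β' : Ω} (h : (α, β) ∈ c) (h' : (α', β') ∈ c) :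
    (if α ∈ Δ then 1 else 0) + (if β ∈ Δ then 1 else 0) =
      (if α' ∈ Δ then 1 else 0) + (if β' ∈ Δ then 1 else 0) := by
  rw [← jnum_diagRel Δ h, ← jnum_diagRel Δ h']
  exact hP.2 _ hΔ.2 c hc c hc _ h _ h'

lemma IsJordanConfig.subset_prod_union_prod (hP : IsJordanConfig P) {c : Set (Ω × Ω)}
    (hc : c ∈ P) {α₀ β₀ : Ω} (h₀ : (α₀, β₀) ∈ c) {Δ₁ Δ₂ : Set Ω} (hΔ₁ : Δ₁ ∈ fibers P)
    (hΔ₂ : Δ₂ ∈ fibers P) (hα₀ : α₀ ∈ Δ₁) (hβ₀ : β₀ ∈ Δ₂) :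
    c ⊆ Δ₁ ×ˢ Δ₂ ∪ Δ₂ ×ˢ Δ₁ := by
  rintro ⟨α, β⟩ h
  obtain ⟨Δα, hΔα, hα⟩ := hP.1.exists_mem_fibers α
  obtain ⟨Δβ, hΔβ, hβ⟩ := hP.1.exists_mem_fibers β
  have mem_iff {Δ Δ' : Set Ω} (hΔ : Δ ∈ fibers P) (hΔ' : Δ' ∈ fibers P) {ω : Ω}
      (hω : ω ∈ Δ) : ω ∈ Δ' ↔ Δ = Δ' :=
    ⟨hP.1.1.fibers_eq_of_mem hΔ hΔ' hω, fun e => e ▸ hω⟩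
  have hcount : ∀ x, (if Δα = x then 1 else 0 : ℕ) + (if Δβ = x then 1 else 0) =
      (if Δ₁ = x then 1 else 0) + (if Δ₂ = x then 1 else 0) := by
    intro x
    by_cases hx : x ∈ fibers P
    · simpa only [mem_iff hΔα hx hα, mem_iff hΔβ hx hβ, mem_iff hΔ₁ hx hα₀,
        mem_iff hΔ₂ hx hβ₀] using hP.fiber_count_eq hc hx h h₀
    · have hne {Δ : Set Ω} (hΔ : Δ ∈ fibers P) : Δ ≠ x := fun e => hx (e ▸ hΔ)
      simp only [hne hΔα, hne hΔβ, hne hΔ₁, hne hΔ₂, if_false]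
  rcases eq_and_eq_or_eq_and_eq_of_indicator_add_eq hcount with ⟨rfl, rfl⟩ | ⟨rfl, rfl⟩
  · exact Or.inl ⟨hα, hβ⟩
  · exact Or.inr ⟨hα, hβ⟩

theorem statement6_general {Ω : Type*}
    (P : Set (Set (Ω × Ω))) (hJC : IsJordanConfig P) :
    ∃ Q : Set (Set Ω),
      (∀ Δ ∈ Q, Δ.Nonempty) ∧
      (∀ Δ ∈ Q, ∀ Δ' ∈ Q, Δ ≠ Δ' → Δ ∩ Δ' = ∅) ∧
      ⋃₀ Q = Set.univ ∧
      (∀ Δ ∈ Q, diagRel Δ ∈ P) ∧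
      (∀ c ∈ P, ∃ Δ₁ ∈ Q, ∃ Δ₂ ∈ Q,
        c ⊆ (Δ₁ ×ˢ Δ₂) ∪ (Δ₂ ×ˢ Δ₁) ∧
        (∀ ω ∈ Δ₁, ∀ ω' ∈ Δ₁,
          (outSet c ω).ncard + (outSet (transposeRel c) ω).ncard =
            (outSet c ω').ncard + (outSet (transposeRel c) ω').ncard) ∧
        (∀ ω ∈ Δ₂, ∀ ω' ∈ Δ₂,
          (outSet c ω).ncard + (outSet (transposeRel c) ω).ncard =
            (outSet c ω').ncard + (outSet (transposeRel c) ω').ncard)) := by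
  refine ⟨fibers P, fun Δ hΔ => hΔ.1, fun Δ hΔ Δ' hΔ' hne => ?_, ?_, fun Δ hΔ => hΔ.2,
    fun c hc => ?_⟩
  · exact Set.eq_empty_of_forall_notMem fun ω hω =>
      hne (hJC.1.1.fibers_eq_of_mem hΔ hΔ' hω.1 hω.2)
  · exact Set.eq_univ_of_forall fun ω => Set.mem_sUnion.mpr (hJC.1.exists_mem_fibers ω)
  · obtain ⟨⟨α₀, β₀⟩, h₀⟩ := hJC.1.1.1 c hc
    obtain ⟨Δ₁, hΔ₁, hα₀⟩ := hJC.1.exists_mem_fibers α₀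
    obtain ⟨Δ₂, hΔ₂, hβ₀⟩ := hJC.1.exists_mem_fibers β₀
    exact ⟨Δ₁, hΔ₁, Δ₂, hΔ₂, hJC.subset_prod_union_prod hc h₀ hΔ₁ hΔ₂ hα₀ hβ₀,
      fun _ hω _ hω' => hJC.degree_eq_of_mem_fibers hc hΔ₁ hω hω',
      fun _ hω _ hω' => hJC.degree_eq_of_mem_fibers hc hΔ₂ hω hω'⟩

theorem statement6 {Ω : Type*} [Fintype Ω] [Nonempty Ω]
    (P : Set (Set (Ω × Ω))) (hJC : IsJordanConfig P) :
    ∃ Q : Set (Set Ω),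
      (∀ Δ ∈ Q, Δ.Nonempty) ∧
      (∀ Δ ∈ Q, ∀ Δ' ∈ Q, Δ ≠ Δ' → Δ ∩ Δ' = ∅) ∧
      ⋃₀ Q = Set.univ ∧
      (∀ Δ ∈ Q, diagRel Δ ∈ P) ∧
      (∀ c ∈ P, ∃ Δ₁ ∈ Q, ∃ Δ₂ ∈ Q,
        c ⊆ (Δ₁ ×ˢ Δ₂) ∪ (Δ₂ ×ˢ Δ₁) ∧
        (∀ ω ∈ Δ₁, ∀ ω' ∈ Δ₁,
          (outSet c ω).ncard + (outSet (transposeRel c) ω).ncard =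
            (outSet c ω').ncard + (outSet (transposeRel c) ω').ncard) ∧
        (∀ ω ∈ Δ₂, ∀ ω' ∈ Δ₂,
          (outSet c ω).ncard + (outSet (transposeRel c) ω).ncard =
            (outSet c ω').ncard + (outSet (transposeRel c) ω').ncard)) :=
  statement6_general P hJC

end JordanPaper

end
end

section
/- Let (Ω,C) be a Jordan configuration such that the diagonal relation 1_Ω is a class of C (i.e. Ω is a single fiber), and assume C is not regular, i.e. some class C ∈ C has non-constant valency function ω ↦ |C(ω)|. Then there exists a bipartition Ω = Ω_0 ∪ Ω_1 with Ω_0 ∩ Ω_1 = ∅ and |Ω_0| = |Ω_1| such that every non-regular class C ∈ C satisfies C ⊆ Ω_i × Ω_{1−i} for some i ∈ {0,1} and the function ω ↦ |C(ω)| is constant on Ω_i. -/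
open Matrix

noncomputable section

namespace JordanPaper

open scoped Classical

variable {Ω : Type*}

section Statement7Aux

variable [Fintype Ω]

/-- Pick the class of `P` containing a pair. -/
noncomputable def cls (P : Set (Set (Ω × Ω))) (p : Ω × Ω) : Set (Ω × Ω) :=
  if h : ∃ e ∈ P, p ∈ e then h.choose else ∅

lemma cls_spec (P : Set (Set (Ω × Ω))) (hU : ⋃₀ P = Set.univ) (p : Ω × Ω) :
    cls P p ∈ P ∧ p ∈ cls P p := by
  have h : ∃ e ∈ P, p ∈ e := by
    have : p ∈ ⋃₀ P := by rw [hU]; trivial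
    simpa using this
  rw [cls, dif_pos h]
  exact ⟨h.choose_spec.1, h.choose_spec.2⟩

lemma cls_eq (P : Set (Set (Ω × Ω))) (hdis : ∀ c ∈ P, ∀ d ∈ P, c ≠ d → c ∩ d = ∅)
    (hU : ⋃₀ P = Set.univ) {e : Set (Ω × Ω)} (he : e ∈ P) {p : Ω × Ω} (hp : p ∈ e) :
    cls P p = e := by
  by_contra hne
  have h1 := cls_spec P hU p
  have := hdis _ h1.1 _ he hne
  have h2 : p ∈ cls P p ∩ e := Set.mem_inter h1.2 hp
  rw [this] at h2
  exact h2

/-- out-valency -/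
noncomputable def fdeg (c : Set (Ω × Ω)) (ω : Ω) : ℕ := (outSet c ω).ncard

/-- in-valency -/
noncomputable def gdeg (c : Set (Ω × Ω)) (ω : Ω) : ℕ := (outSet (transposeRel c) ω).ncard

lemma sum_in (P : Set (Set (Ω × Ω))) (hdis : ∀ c ∈ P, ∀ d ∈ P, c ≠ d → c ∩ d = ∅)
    (hU : ⋃₀ P = Set.univ) (s : Set Ω) (β : Ω) :
    s.ncard = ∑ e ∈ (Set.toFinite P).toFinset, {γ | γ ∈ s ∧ (γ, β) ∈ e}.ncard := by
  rw [Set.ncard_eq_toFinset_card',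
    Finset.card_eq_sum_card_fiberwise (f := fun γ => cls P (γ, β))
      (t := (Set.toFinite P).toFinset)
      (fun γ _ => by simpa using (cls_spec P hU (γ, β)).1)]
  refine Finset.sum_congr rfl fun e he => ?_
  rw [Set.ncard_eq_toFinset_card']
  congr 1
  ext γ
  simp only [Finset.mem_filter, Set.mem_toFinset, Set.mem_setOf_eq]
  rw [Set.Finite.mem_toFinset] at he
  constructor
  · rintro ⟨hs, hcls⟩
    exact ⟨hs, hcls ▸ (cls_spec P hU (γ, β)).2⟩
  · rintro ⟨hs, hmem⟩
    exact ⟨hs, cls_eq P hdis hU he hmem⟩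

lemma sum_out (P : Set (Set (Ω × Ω))) (hdis : ∀ c ∈ P, ∀ d ∈ P, c ≠ d → c ∩ d = ∅)
    (hU : ⋃₀ P = Set.univ) (s : Set Ω) (α : Ω) :
    s.ncard = ∑ e ∈ (Set.toFinite P).toFinset, {γ | γ ∈ s ∧ (α, γ) ∈ e}.ncard := by
  rw [Set.ncard_eq_toFinset_card',
    Finset.card_eq_sum_card_fiberwise (f := fun γ => cls P (α, γ))
      (t := (Set.toFinite P).toFinset)
      (fun γ _ => by simpa using (cls_spec P hU (α, γ)).1)]
  refine Finset.sum_congr rfl fun e he => ?_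
  rw [Set.ncard_eq_toFinset_card']
  congr 1
  ext γ
  simp only [Finset.mem_filter, Set.mem_toFinset, Set.mem_setOf_eq]
  rw [Set.Finite.mem_toFinset] at he
  constructor
  · rintro ⟨hs, hcls⟩
    exact ⟨hs, hcls ▸ (cls_spec P hU (α, γ)).2⟩
  · rintro ⟨hs, hmem⟩
    exact ⟨hs, cls_eq P hdis hU he hmem⟩

/-- Key identity: on each class, `fdeg c α + gdeg c β` is constant. -/
lemma key_const (P : Set (Set (Ω × Ω)))
    (hdis : ∀ c ∈ P, ∀ d ∈ P, c ≠ d → c ∩ d = ∅) (hU : ⋃₀ P = Set.univ)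
    (hJ : IsJordanCond P) {c e : Set (Ω × Ω)} (hc : c ∈ P) (he : e ∈ P)
    {α β α' β' : Ω} (hp : (α, β) ∈ e) (hq : (α', β') ∈ e) :
    fdeg c α + gdeg c β = fdeg c α' + gdeg c β' := by
  have hL : ∀ x y : Ω, fdeg c x + gdeg c y
      = ∑ d ∈ (Set.toFinite P).toFinset, jnum c d x y := by
    intro x y
    have h1 : fdeg c x = ∑ d ∈ (Set.toFinite P).toFinset, cnum c d x y := by
      rw [fdeg, sum_in P hdis hU (outSet c x) y]
      refine Finset.sum_congr rfl fun d _ => rfl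
    have h2 : gdeg c y = ∑ d ∈ (Set.toFinite P).toFinset, cnum d c x y := by
      rw [gdeg, sum_out P hdis hU (outSet (transposeRel c) y) x]
      refine Finset.sum_congr rfl fun d _ => ?_
      rw [cnum]
      congr 1
      ext γ
      simp only [Set.mem_setOf_eq, Set.mem_inter_iff, outSet, transposeRel]
      tauto
    rw [h1, h2, ← Finset.sum_add_distrib]
    rfl
  rw [hL α β, hL α' β']
  refine Finset.sum_congr rfl fun d hd => ?_
  rw [Set.Finite.mem_toFinset] at hd
  exact hJ c hc d hd e he (α, β) hp (α', β') hq

/-- Valency-sum constancy. -/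
lemma valsum_const (P : Set (Set (Ω × Ω)))
    (hdis : ∀ c ∈ P, ∀ d ∈ P, c ≠ d → c ∩ d = ∅) (hU : ⋃₀ P = Set.univ)
    (hJ : IsJordanCond P) (hhom : diagRel (Set.univ : Set Ω) ∈ P)
    {c : Set (Ω × Ω)} (hc : c ∈ P) (ω ω' : Ω) :
    fdeg c ω + gdeg c ω = fdeg c ω' + gdeg c ω' := by
  exact key_const P hdis hU hJ hc hhom (by constructor <;> simp [diagRel])
    (by constructor <;> simp [diagRel])

/-- Difference constancy on classes, in `ℤ`. -/
lemma diff_const (P : Set (Set (Ω × Ω)))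
    (hdis : ∀ c ∈ P, ∀ d ∈ P, c ≠ d → c ∩ d = ∅) (hU : ⋃₀ P = Set.univ)
    (hJ : IsJordanCond P) (hhom : diagRel (Set.univ : Set Ω) ∈ P)
    {c e : Set (Ω × Ω)} (hc : c ∈ P) (he : e ∈ P)
    {α β α' β' : Ω} (hp : (α, β) ∈ e) (hq : (α', β') ∈ e) :
    (fdeg c α : ℤ) - fdeg c β = (fdeg c α' : ℤ) - fdeg c β' := by
  have h1 := key_const P hdis hU hJ hc he hp hq
  have h2 := valsum_const P hdis hU hJ hhom hc β β'
  omega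

/-- Level-set counting: `|f⁻¹(f ω - t)| + |f⁻¹(f ω + t)|` is constant in `ω`. -/
lemma level_const (P : Set (Set (Ω × Ω)))
    (hdis : ∀ c ∈ P, ∀ d ∈ P, c ≠ d → c ∩ d = ∅) (hU : ⋃₀ P = Set.univ)
    (hJ : IsJordanCond P) (hhom : diagRel (Set.univ : Set Ω) ∈ P)
    {c : Set (Ω × Ω)} (hc : c ∈ P) (t : ℤ) (ω ω' : Ω) :
    {γ | (fdeg c γ : ℤ) = fdeg c ω - t}.ncard + {γ | (fdeg c γ : ℤ) = fdeg c ω + t}.ncard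
    = {γ | (fdeg c γ : ℤ) = fdeg c ω' - t}.ncard + {γ | (fdeg c γ : ℤ) = fdeg c ω' + t}.ncard := by
  set T := (Set.toFinite P).toFinset.filter
    (fun e => ∀ p ∈ e, (fdeg c (Prod.fst p) : ℤ) - fdeg c (Prod.snd p) = t) with hT
  have hA : ∀ ω : Ω, {γ | (fdeg c γ : ℤ) = fdeg c ω - t}.ncard = ∑ e ∈ T, fdeg e ω := by
    intro ω
    rw [Set.ncard_eq_toFinset_card',
      Finset.card_eq_sum_card_fiberwise (f := fun γ => cls P (ω, γ)) (t := T) ?_]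
    · refine Finset.sum_congr rfl fun e he => ?_
      obtain ⟨heP, hval⟩ := Finset.mem_filter.mp he
      rw [Set.Finite.mem_toFinset] at heP
      have hset : Finset.filter (fun γ => cls P (ω, γ) = e)
          ({γ | (fdeg c γ : ℤ) = fdeg c ω - t}.toFinset)
          = (outSet e ω).toFinset := by
        ext γ
        simp only [Finset.mem_filter, Set.mem_toFinset, Set.mem_setOf_eq]
        simp only [outSet, Set.mem_setOf_eq]
        constructor
        · rintro ⟨_, hcls⟩
          exact hcls ▸ (cls_spec P hU (ω, γ)).2
        · intro hmem
          have hv : (fdeg c ω : ℤ) - fdeg c γ = t := hval (ω, γ) hmem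
          exact ⟨by omega, cls_eq P hdis hU heP hmem⟩
      rw [hset, fdeg, Set.ncard_eq_toFinset_card']
    · intro γ hγ
      rw [Finset.mem_coe] at hγ ⊢
      rw [Set.mem_toFinset, Set.mem_setOf_eq] at hγ
      refine Finset.mem_filter.mpr ⟨by simpa using (cls_spec P hU (ω, γ)).1, ?_⟩
      intro p hp
      have h0 := diff_const P hdis hU hJ hhom hc (cls_spec P hU (ω, γ)).1
        (show (p.1, p.2) ∈ cls P (ω, γ) by simpa using hp) (cls_spec P hU (ω, γ)).2
      omega
  have hB : ∀ ω : Ω, {γ | (fdeg c γ : ℤ) = fdeg c ω + t}.ncard = ∑ e ∈ T, gdeg e ω := by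
    intro ω
    rw [Set.ncard_eq_toFinset_card',
      Finset.card_eq_sum_card_fiberwise (f := fun γ => cls P (γ, ω)) (t := T) ?_]
    · refine Finset.sum_congr rfl fun e he => ?_
      obtain ⟨heP, hval⟩ := Finset.mem_filter.mp he
      rw [Set.Finite.mem_toFinset] at heP
      have hset : Finset.filter (fun γ => cls P (γ, ω) = e)
          ({γ | (fdeg c γ : ℤ) = fdeg c ω + t}.toFinset)
          = (outSet (transposeRel e) ω).toFinset := by
        ext γ
        simp only [Finset.mem_filter, Set.mem_toFinset, Set.mem_setOf_eq]
        simp only [outSet, transposeRel, Set.mem_setOf_eq]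
        constructor
        · rintro ⟨_, hcls⟩
          exact hcls ▸ (cls_spec P hU (γ, ω)).2
        · intro hmem
          have hv : (fdeg c γ : ℤ) - fdeg c ω = t := hval (γ, ω) hmem
          exact ⟨by omega, cls_eq P hdis hU heP hmem⟩
      rw [hset, gdeg, Set.ncard_eq_toFinset_card']
    · intro γ hγ
      rw [Finset.mem_coe] at hγ ⊢
      rw [Set.mem_toFinset, Set.mem_setOf_eq] at hγ
      refine Finset.mem_filter.mpr ⟨by simpa using (cls_spec P hU (γ, ω)).1, ?_⟩
      intro p hp
      have h0 := diff_const P hdis hU hJ hhom hc (cls_spec P hU (γ, ω)).1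
        (show (p.1, p.2) ∈ cls P (γ, ω) by simpa using hp) (cls_spec P hU (γ, ω)).2
      omega
  rw [hA ω, hB ω, hA ω', hB ω', ← Finset.sum_add_distrib, ← Finset.sum_add_distrib]
  refine Finset.sum_congr rfl fun e he => ?_
  obtain ⟨heP, -⟩ := Finset.mem_filter.mp he
  rw [Set.Finite.mem_toFinset] at heP
  exact valsum_const P hdis hU hJ hhom heP ω ω' 

/-- Two-values structure for a non-regular class. -/
lemma two_values (P : Set (Set (Ω × Ω)))
    (hdis : ∀ c ∈ P, ∀ d ∈ P, c ≠ d → c ∩ d = ∅) (hU : ⋃₀ P = Set.univ)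
    (hJ : IsJordanCond P) (hhom : diagRel (Set.univ : Set Ω) ∈ P)
    {c : Set (Ω × Ω)} (hc : c ∈ P) [Nonempty Ω]
    (hnc : ¬ ∀ ω ω' : Ω, fdeg c ω = fdeg c ω') :
    ∃ m M : ℕ, m < M ∧ (∀ ω, fdeg c ω = m ∨ fdeg c ω = M) ∧
      {ω | fdeg c ω = m}.ncard = {ω | fdeg c ω = M}.ncard := by
  obtain ⟨ωM, hωM⟩ := Finite.exists_max (fdeg c)
  obtain ⟨ωm, hωm⟩ := Finite.exists_min (fdeg c)
  set m := fdeg c ωm with hm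
  set M := fdeg c ωM with hM
  have hmM : m < M := by
    rcases lt_or_eq_of_le (hωm ωM) with h | h
    · exact h
    · exfalso
      apply hnc
      intro ω ω'
      have h1 := hωM ω; have h2 := hωm ω; have h3 := hωM ω'; have h4 := hωm ω'
      omega
  -- level sets all have the same size
  have hS : ∀ ω ω' : Ω, {γ | fdeg c γ = fdeg c ω}.ncard = {γ | fdeg c γ = fdeg c ω'}.ncard := by
    intro ω ω'
    have h := level_const P hdis hU hJ hhom hc 0 ω ω'
    have e1 : ∀ x : Ω, {γ | (fdeg c γ : ℤ) = fdeg c x - 0} = {γ | fdeg c γ = fdeg c x} := by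
      intro x; ext γ; simp only [Set.mem_setOf_eq]; omega
    have e2 : ∀ x : Ω, {γ | (fdeg c γ : ℤ) = fdeg c x + 0} = {γ | fdeg c γ = fdeg c x} := by
      intro x; ext γ; simp only [Set.mem_setOf_eq]; omega
    rw [e1, e2, e1, e2] at h
    omega
  have hvals : ∀ ω, fdeg c ω = m ∨ fdeg c ω = M := by
    intro ω
    by_contra hcon
    push_neg at hcon
    have h1 : m < fdeg c ω := lt_of_le_of_ne (hωm ω) (Ne.symm hcon.1)
    have h2 : fdeg c ω < M := lt_of_le_of_ne (hωM ω) hcon.2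
    have h := level_const P hdis hU hJ hhom hc ((M : ℤ) - m) ω ωM
    have e1 : {γ | (fdeg c γ : ℤ) = fdeg c ω - ((M : ℤ) - m)} = ∅ := by
      ext γ; simp only [Set.mem_setOf_eq, Set.mem_empty_iff_false, iff_false]
      have := hωm γ; omega
    have e2 : {γ | (fdeg c γ : ℤ) = fdeg c ω + ((M : ℤ) - m)} = ∅ := by
      ext γ; simp only [Set.mem_setOf_eq, Set.mem_empty_iff_false, iff_false]
      have := hωM γ; omega
    have e3 : ωm ∈ {γ | (fdeg c γ : ℤ) = fdeg c ωM - ((M : ℤ) - m)} := by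
      simp only [Set.mem_setOf_eq]; omega
    have e4 : 0 < {γ | (fdeg c γ : ℤ) = fdeg c ωM - ((M : ℤ) - m)}.ncard :=
      Set.ncard_pos (Set.toFinite _) |>.mpr ⟨ωm, e3⟩
    rw [e1, e2] at h
    simp only [Set.ncard_empty] at h
    omega
  refine ⟨m, M, hmM, hvals, ?_⟩
  have em : {ω | fdeg c ω = m} = {γ | fdeg c γ = fdeg c ωm} := rfl
  have eM : {ω | fdeg c ω = M} = {γ | fdeg c γ = fdeg c ωM} := rfl
  rw [em, eM]
  exact hS ωm ωM

lemma card_edges_src (c : Set (Ω × Ω)) (A : Set Ω) :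
    (c ∩ (A ×ˢ (Set.univ : Set Ω))).ncard = ∑ α ∈ (Set.toFinite A).toFinset, fdeg c α := by
  rw [Set.ncard_eq_toFinset_card _ (Set.toFinite _),
    Finset.card_eq_sum_card_fiberwise (f := fun p => p.1) (t := (Set.toFinite A).toFinset) ?_]
  · refine Finset.sum_congr rfl fun α hα => ?_
    rw [Set.Finite.mem_toFinset] at hα
    have hset : Finset.filter (fun p => p.1 = α)
          ((Set.toFinite (c ∩ (A ×ˢ (Set.univ : Set Ω)))).toFinset)
        = ((Set.toFinite (outSet c α)).toFinset).image (fun γ => (α, γ)) := by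
      ext ⟨x, y⟩
      simp only [Finset.mem_filter, Set.Finite.mem_toFinset, Set.mem_inter_iff, Set.mem_prod,
        Set.mem_univ, and_true, Finset.mem_image, outSet, Set.mem_setOf_eq, Prod.mk.injEq]
      constructor
      · rintro ⟨⟨hc1, _⟩, rfl⟩
        exact ⟨y, hc1, rfl, rfl⟩
      · rintro ⟨γ, hγ, rfl, rfl⟩
        exact ⟨⟨hγ, hα⟩, rfl⟩
    rw [hset, Finset.card_image_of_injective _ (fun a b h => by simpa using h),
      fdeg, Set.ncard_eq_toFinset_card _ (Set.toFinite _)]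
  · intro p hp
    rw [Finset.mem_coe, Set.Finite.mem_toFinset] at hp
    rw [Finset.mem_coe, Set.Finite.mem_toFinset]
    exact hp.2.1

lemma card_edges_tgt (c : Set (Ω × Ω)) (A : Set Ω) :
    (c ∩ ((Set.univ : Set Ω) ×ˢ A)).ncard = ∑ β ∈ (Set.toFinite A).toFinset, gdeg c β := by
  rw [Set.ncard_eq_toFinset_card _ (Set.toFinite _),
    Finset.card_eq_sum_card_fiberwise (f := fun p => p.2) (t := (Set.toFinite A).toFinset) ?_]
  · refine Finset.sum_congr rfl fun β hβ => ?_
    rw [Set.Finite.mem_toFinset] at hβ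
    have hset : Finset.filter (fun p => p.2 = β)
          ((Set.toFinite (c ∩ ((Set.univ : Set Ω) ×ˢ A))).toFinset)
        = ((Set.toFinite (outSet (transposeRel c) β)).toFinset).image (fun γ => (γ, β)) := by
      ext ⟨x, y⟩
      simp only [Finset.mem_filter, Set.Finite.mem_toFinset, Set.mem_inter_iff, Set.mem_prod,
        Set.mem_univ, true_and, Finset.mem_image, outSet, transposeRel, Set.mem_setOf_eq,
        Prod.mk.injEq]
      constructor
      · rintro ⟨⟨hc1, _⟩, rfl⟩
        exact ⟨x, hc1, rfl, rfl⟩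
      · rintro ⟨γ, hγ, rfl, rfl⟩
        exact ⟨⟨hγ, hβ⟩, rfl⟩
    rw [hset, Finset.card_image_of_injective _ (fun a b h => by simpa using h),
      gdeg, Set.ncard_eq_toFinset_card _ (Set.toFinite _)]
  · intro p hp
    rw [Finset.mem_coe, Set.Finite.mem_toFinset] at hp
    rw [Finset.mem_coe, Set.Finite.mem_toFinset]
    exact hp.2.2

/-- A nonregular class is "cross" w.r.t. its own bipartition. -/
lemma cross (P : Set (Set (Ω × Ω)))
    (hne : ∀ c ∈ P, c.Nonempty)
    (hdis : ∀ c ∈ P, ∀ d ∈ P, c ≠ d → c ∩ d = ∅) (hU : ⋃₀ P = Set.univ)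
    (hJ : IsJordanCond P) (hhom : diagRel (Set.univ : Set Ω) ∈ P)
    {c : Set (Ω × Ω)} (hc : c ∈ P) {m M : ℕ} (hmM : m < M)
    (hval : ∀ ω, fdeg c ω = m ∨ fdeg c ω = M)
    (hcard : {ω | fdeg c ω = m}.ncard = {ω | fdeg c ω = M}.ncard) [Nonempty Ω] :
    (∀ p ∈ c, fdeg c (p : Ω × Ω).1 = M ∧ fdeg c (p : Ω × Ω).2 = m) ∨
    (∀ p ∈ c, fdeg c (p : Ω × Ω).1 = m ∧ fdeg c (p : Ω × Ω).2 = M) := by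
  obtain ⟨p₀, hp₀⟩ := hne c hc
  have hdiff : ∀ p ∈ c, (fdeg c (Prod.fst p) : ℤ) - fdeg c (Prod.snd p)
      = (fdeg c p₀.1 : ℤ) - fdeg c p₀.2 := by
    intro p hp
    exact diff_const P hdis hU hJ hhom hc hc (show (p.1, p.2) ∈ c by simpa using hp)
      (show (p₀.1, p₀.2) ∈ c by simpa using hp₀)
  set d₀ : ℤ := (fdeg c p₀.1 : ℤ) - fdeg c p₀.2 with hd₀
  have hMne : {ω | fdeg c ω = M}.Nonempty := by
    rcases Set.eq_empty_or_nonempty {ω | fdeg c ω = M} with h | h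
    · exfalso
      have h0 : {ω | fdeg c ω = m}.ncard = 0 := by rw [hcard, h, Set.ncard_empty]
      have h1 : {ω | fdeg c ω = m} = ∅ := (Set.ncard_eq_zero (Set.toFinite _)).mp h0
      obtain ⟨ω⟩ := ‹Nonempty Ω›
      rcases hval ω with hv | hv
      · exact absurd (show ω ∈ {ω | fdeg c ω = m} from hv) (by rw [h1]; simp)
      · exact absurd (show ω ∈ {ω | fdeg c ω = M} from hv) (by rw [h]; simp)
    · exact h
  have hmne : {ω | fdeg c ω = m}.Nonempty := by
    rcases Set.eq_empty_or_nonempty {ω | fdeg c ω = m} with h | h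
    · exfalso
      have h0 : {ω | fdeg c ω = M}.ncard = 0 := by rw [← hcard, h, Set.ncard_empty]
      have h1 : {ω | fdeg c ω = M} = ∅ := (Set.ncard_eq_zero (Set.toFinite _)).mp h0
      obtain ⟨ω⟩ := ‹Nonempty Ω›
      rcases hval ω with hv | hv
      · exact absurd (show ω ∈ {ω | fdeg c ω = m} from hv) (by rw [h]; simp)
      · exact absurd (show ω ∈ {ω | fdeg c ω = M} from hv) (by rw [h1]; simp)
    · exact h
  rcases eq_or_ne d₀ 0 with h0 | h0
  · exfalso
    have hlevel : ∀ p ∈ c, fdeg c (Prod.fst p) = fdeg c (Prod.snd p) := by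
      intro p hp
      have := hdiff p hp
      omega
    have main : ∀ v : ℕ, ({ω | fdeg c ω = v} : Set Ω).Nonempty →
        v + v = fdeg c p₀.1 + gdeg c p₀.1 := by
      intro v hv
      set X : Set Ω := {ω | fdeg c ω = v} with hX
      have h1 : c ∩ (X ×ˢ (Set.univ : Set Ω)) = c ∩ ((Set.univ : Set Ω) ×ˢ X) := by
        ext p
        simp only [Set.mem_inter_iff, Set.mem_prod, Set.mem_univ, true_and, and_true, hX,
          Set.mem_setOf_eq]
        constructor
        · rintro ⟨hpc, hp1⟩
          exact ⟨hpc, by rw [← hlevel p hpc]; exact hp1⟩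
        · rintro ⟨hpc, hp2⟩
          exact ⟨hpc, by rw [hlevel p hpc]; exact hp2⟩
      have h2 := card_edges_src c X
      have h3 := card_edges_tgt c X
      rw [h1, h3] at h2
      have h4 : ∑ α ∈ (Set.toFinite X).toFinset, fdeg c α = (Set.toFinite X).toFinset.card * v := by
        have hall : ∀ α ∈ (Set.toFinite X).toFinset, fdeg c α = v := fun α hα => by
          rw [Set.Finite.mem_toFinset] at hα; exact hα
        rw [Finset.sum_congr rfl hall, Finset.sum_const, smul_eq_mul]
      have h5 : ∑ α ∈ (Set.toFinite X).toFinset, fdeg c α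
            + ∑ α ∈ (Set.toFinite X).toFinset, gdeg c α
          = (Set.toFinite X).toFinset.card * (fdeg c p₀.1 + gdeg c p₀.1) := by
        have hall : ∀ α ∈ (Set.toFinite X).toFinset, fdeg c α + gdeg c α
            = fdeg c p₀.1 + gdeg c p₀.1 :=
          fun α _ => valsum_const P hdis hU hJ hhom hc α p₀.1
        rw [← Finset.sum_add_distrib, Finset.sum_congr rfl hall, Finset.sum_const,
          smul_eq_mul]
      have h6 : 0 < (Set.toFinite X).toFinset.card := by
        rw [← Set.ncard_eq_toFinset_card _ (Set.toFinite _)]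
        exact (Set.ncard_pos (Set.toFinite _)).mpr hv
      rw [h2, h4] at h5
      refine Nat.eq_of_mul_eq_mul_left h6 ?_
      rw [Nat.mul_add]
      exact h5
    have hM := main M hMne
    have hm := main m hmne
    omega
  rcases lt_or_gt_of_ne h0 with hneg | hpos
  · right
    intro p hp
    have hd := hdiff p hp
    have h1 := hval p.1
    have h2 := hval p.2
    omega
  · left
    intro p hp
    have hd := hdiff p hp
    have h1 := hval p.1
    have h2 := hval p.2
    omega

/-- The bipartitions from any two nonregular classes coincide. -/
lemma same_partition (P : Set (Set (Ω × Ω)))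
    (hne : ∀ c ∈ P, c.Nonempty)
    (hdis : ∀ c ∈ P, ∀ d ∈ P, c ≠ d → c ∩ d = ∅) (hU : ⋃₀ P = Set.univ)
    (hJ : IsJordanCond P) (hhom : diagRel (Set.univ : Set Ω) ∈ P)
    {c₀ c : Set (Ω × Ω)} (hc0 : c₀ ∈ P) (hc : c ∈ P)
    {m₀ M₀ m M : ℕ} (hmM0 : m₀ < M₀) (hmM : m < M)
    (hval0 : ∀ ω, fdeg c₀ ω = m₀ ∨ fdeg c₀ ω = M₀)
    (hcard0 : {ω | fdeg c₀ ω = m₀}.ncard = {ω | fdeg c₀ ω = M₀}.ncard)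
    (hval : ∀ ω, fdeg c ω = m ∨ fdeg c ω = M)
    (hcard : {ω | fdeg c ω = m}.ncard = {ω | fdeg c ω = M}.ncard) :
    {ω | fdeg c ω = M} = {ω | fdeg c₀ ω = M₀} ∨
    {ω | fdeg c ω = M} = {ω | fdeg c₀ ω = m₀} := by
  by_contra hcon
  push_neg at hcon
  obtain ⟨hAO0, hAO1⟩ := hcon
  -- cardinality bookkeeping
  have huniv : ∀ (f : Ω → ℕ) (a b : ℕ), (∀ ω, f ω = a ∨ f ω = b) →
      {ω | f ω = a} ∪ {ω | f ω = b} = Set.univ := by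
    intro f a b h
    ext ω
    simp only [Set.mem_union, Set.mem_setOf_eq, Set.mem_univ, iff_true]
    exact h ω
  have hcardA : {ω | fdeg c ω = M}.ncard + {ω | fdeg c ω = m}.ncard
      = (Set.univ : Set Ω).ncard := by
    rw [← Set.ncard_union_eq (by
        rw [Set.disjoint_iff_inter_eq_empty]
        ext ω
        simp only [Set.mem_inter_iff, Set.mem_setOf_eq, Set.mem_empty_iff_false, iff_false,
          not_and]
        omega) (Set.toFinite _) (Set.toFinite _)]
    rw [Set.union_comm, huniv (fdeg c) m M hval]
  have hcardO : {ω | fdeg c₀ ω = M₀}.ncard + {ω | fdeg c₀ ω = m₀}.ncard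
      = (Set.univ : Set Ω).ncard := by
    rw [← Set.ncard_union_eq (by
        rw [Set.disjoint_iff_inter_eq_empty]
        ext ω
        simp only [Set.mem_inter_iff, Set.mem_setOf_eq, Set.mem_empty_iff_false, iff_false,
          not_and]
        omega) (Set.toFinite _) (Set.toFinite _)]
    rw [Set.union_comm, huniv (fdeg c₀) m₀ M₀ hval0]
  have hsize : {ω | fdeg c ω = M}.ncard = {ω | fdeg c₀ ω = M₀}.ncard
      ∧ {ω | fdeg c ω = M}.ncard = {ω | fdeg c₀ ω = m₀}.ncard
      ∧ {ω | fdeg c ω = M}.ncard = {ω | fdeg c ω = m}.ncard := by omega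
  -- complement identification helper
  have hcompl : ∀ ω : Ω, (ω ∈ {ω | fdeg c ω = M} ↔ ω ∉ {ω | fdeg c ω = m}) := by
    intro ω
    simp only [Set.mem_setOf_eq]
    have := hval ω
    omega
  have hcompl0 : ∀ ω : Ω, (ω ∈ {ω | fdeg c₀ ω = M₀} ↔ ω ∉ {ω | fdeg c₀ ω = m₀}) := by
    intro ω
    simp only [Set.mem_setOf_eq]
    have := hval0 ω
    omega
  -- nonempty corner blocks
  have hP1 : ({ω | fdeg c₀ ω = M₀} ∩ {ω | fdeg c ω = M}).Nonempty := by
    rcases Set.eq_empty_or_nonempty ({ω | fdeg c₀ ω = M₀} ∩ {ω | fdeg c ω = M}) with h | h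
    · exfalso
      have hsub : {ω | fdeg c₀ ω = M₀} ⊆ {ω | fdeg c ω = m} := by
        intro ω hω
        rcases hval ω with hv | hv
        · exact hv
        · exact absurd (Set.mem_inter hω hv) (by rw [h]; exact id)
      have heq : {ω | fdeg c₀ ω = M₀} = {ω | fdeg c ω = m} :=
        Set.eq_of_subset_of_ncard_le hsub (by omega) (Set.toFinite _)
      apply hAO1
      ext ω
      simp only [Set.mem_setOf_eq]
      have h3 := Set.ext_iff.mp heq ω
      simp only [Set.mem_setOf_eq] at h3
      have h4 := hval ω
      have h5 := hval0 ω
      omega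
    · exact h
  have hP4 : ({ω | fdeg c₀ ω = m₀} ∩ {ω | fdeg c ω = m}).Nonempty := by
    rcases Set.eq_empty_or_nonempty ({ω | fdeg c₀ ω = m₀} ∩ {ω | fdeg c ω = m}) with h | h
    · exfalso
      have hsub : {ω | fdeg c₀ ω = m₀} ⊆ {ω | fdeg c ω = M} := by
        intro ω hω
        rcases hval ω with hv | hv
        · exact absurd (Set.mem_inter hω hv) (by rw [h]; exact id)
        · exact hv
      have heq : {ω | fdeg c₀ ω = m₀} = {ω | fdeg c ω = M} :=
        Set.eq_of_subset_of_ncard_le hsub (by omega) (Set.toFinite _)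
      exact hAO1 heq.symm
    · exact h
  have hP2 : ({ω | fdeg c₀ ω = M₀} ∩ {ω | fdeg c ω = m}).Nonempty := by
    rcases Set.eq_empty_or_nonempty ({ω | fdeg c₀ ω = M₀} ∩ {ω | fdeg c ω = m}) with h | h
    · exfalso
      have hsub : {ω | fdeg c₀ ω = M₀} ⊆ {ω | fdeg c ω = M} := by
        intro ω hω
        rcases hval ω with hv | hv
        · exact absurd (Set.mem_inter hω hv) (by rw [h]; exact id)
        · exact hv
      have heq : {ω | fdeg c₀ ω = M₀} = {ω | fdeg c ω = M} :=
        Set.eq_of_subset_of_ncard_le hsub (by omega) (Set.toFinite _)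
      exact hAO0 heq.symm
    · exact h
  obtain ⟨α, hα⟩ := hP1
  obtain ⟨β, hβ⟩ := hP4
  obtain ⟨γ, hγ⟩ := hP2
  have he := cls_spec P hU (α, β)
  set e := cls P (α, β) with hecls
  have hconf : ∀ p ∈ e, fdeg c₀ (Prod.fst p) = M₀ ∧ fdeg c (Prod.fst p) = M
      ∧ fdeg c₀ (Prod.snd p) = m₀ ∧ fdeg c (Prod.snd p) = m := by
    intro p hp
    have h1 := diff_const P hdis hU hJ hhom hc0 he.1
      (show (p.1, p.2) ∈ e by simpa using hp) he.2
    have h2 := diff_const P hdis hU hJ hhom hc he.1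
      (show (p.1, p.2) ∈ e by simpa using hp) he.2
    have ha1 : fdeg c₀ α = M₀ := hα.1
    have ha2 : fdeg c α = M := hα.2
    have hb1 : fdeg c₀ β = m₀ := hβ.1
    have hb2 : fdeg c β = m := hβ.2
    have hv1 := hval0 p.1
    have hv2 := hval0 p.2
    have hv3 := hval p.1
    have hv4 := hval p.2
    omega
  have hfγ : fdeg e γ = 0 := by
    rw [fdeg, Set.ncard_eq_zero (Set.toFinite _)]
    ext y
    simp only [outSet, Set.mem_setOf_eq, Set.mem_empty_iff_false, iff_false]
    intro hy
    have h1 : fdeg c γ = M := (hconf (γ, y) hy).2.1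
    have h2 : fdeg c γ = m := hγ.2
    omega
  have hgγ : gdeg e γ = 0 := by
    rw [gdeg, Set.ncard_eq_zero (Set.toFinite _)]
    ext x
    simp only [outSet, transposeRel, Set.mem_setOf_eq, Set.mem_empty_iff_false, iff_false]
    intro hx
    have h1 : fdeg c₀ γ = m₀ := (hconf (x, γ) hx).2.2.1
    have h2 : fdeg c₀ γ = M₀ := hγ.1
    omega
  have hfα : 0 < fdeg e α :=
    (Set.ncard_pos (Set.toFinite _)).mpr ⟨β, he.2⟩
  have hcontra := valsum_const P hdis hU hJ hhom he.1 α γ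
  omega

end Statement7Aux

theorem statement7 {Ω : Type*} [Fintype Ω] [Nonempty Ω]
    (P : Set (Set (Ω × Ω))) (hJC : IsJordanConfig P)
    (hhom : diagRel (Set.univ : Set Ω) ∈ P)
    (hnonreg : ∃ c ∈ P, ¬ ∀ ω ω' : Ω, (outSet c ω).ncard = (outSet c ω').ncard) :
    ∃ Ω₀ Ω₁ : Set Ω,
      Ω₀ ∪ Ω₁ = Set.univ ∧ Ω₀ ∩ Ω₁ = ∅ ∧ Ω₀.ncard = Ω₁.ncard ∧
      ∀ c ∈ P, (¬ ∀ ω ω' : Ω, (outSet c ω).ncard = (outSet c ω').ncard) →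
        ((c ⊆ Ω₀ ×ˢ Ω₁ ∧ ∀ ω ∈ Ω₀, ∀ ω' ∈ Ω₀, (outSet c ω).ncard = (outSet c ω').ncard) ∨
         (c ⊆ Ω₁ ×ˢ Ω₀ ∧ ∀ ω ∈ Ω₁, ∀ ω' ∈ Ω₁, (outSet c ω).ncard = (outSet c ω').ncard)) := by
  obtain ⟨⟨⟨hne, hdis, hU⟩, -, -⟩, hJ⟩ := hJC
  obtain ⟨c₀, hc0, hnc0⟩ := hnonreg
  have hnc0' : ¬ ∀ ω ω' : Ω, fdeg c₀ ω = fdeg c₀ ω' := hnc0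
  obtain ⟨m₀, M₀, hmM0, hval0, hcard0⟩ := two_values P hdis hU hJ hhom hc0 hnc0'
  refine ⟨{ω | fdeg c₀ ω = M₀}, {ω | fdeg c₀ ω = m₀}, ?_, ?_, ?_, ?_⟩
  · ext ω
    simp only [Set.mem_union, Set.mem_setOf_eq, Set.mem_univ, iff_true]
    exact (hval0 ω).symm
  · ext ω
    simp only [Set.mem_inter_iff, Set.mem_setOf_eq, Set.mem_empty_iff_false, iff_false, not_and]
    omega
  · exact hcard0.symm
  · intro c hc hnc
    have hnc' : ¬ ∀ ω ω' : Ω, fdeg c ω = fdeg c ω' := hnc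
    obtain ⟨m, M, hmM, hval, hcard⟩ := two_values P hdis hU hJ hhom hc hnc'
    have hcases := same_partition P hne hdis hU hJ hhom hc0 hc hmM0 hmM hval0 hcard0 hval hcard
    have hcross := cross P hne hdis hU hJ hhom hc hmM hval hcard
    rcases hcases with hA | hA
    · have hB : {ω | fdeg c ω = m} = {ω | fdeg c₀ ω = m₀} := by
        ext ω
        simp only [Set.mem_setOf_eq]
        have h3 := Set.ext_iff.mp hA ω
        simp only [Set.mem_setOf_eq] at h3
        have h4 := hval ω
        have h5 := hval0 ω
        omega
      rcases hcross with hcr | hcr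
      · left
        constructor
        · intro p hp
          rw [Set.mem_prod]
          constructor
          · have h1 : p.1 ∈ {ω | fdeg c ω = M} := (hcr p hp).1
            rwa [hA] at h1
          · have h1 : p.2 ∈ {ω | fdeg c ω = m} := (hcr p hp).2
            rwa [hB] at h1
        · intro ω hω ω' hω'
          rw [← hA] at hω hω'
          exact (Set.mem_setOf_eq ▸ hω).trans (Set.mem_setOf_eq ▸ hω').symm
      · right
        constructor
        · intro p hp
          rw [Set.mem_prod]
          constructor
          · have h1 : p.1 ∈ {ω | fdeg c ω = m} := (hcr p hp).1
            rwa [hB] at h1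
          · have h1 : p.2 ∈ {ω | fdeg c ω = M} := (hcr p hp).2
            rwa [hA] at h1
        · intro ω hω ω' hω'
          rw [← hB] at hω hω'
          exact (Set.mem_setOf_eq ▸ hω).trans (Set.mem_setOf_eq ▸ hω').symm
    · have hB : {ω | fdeg c ω = m} = {ω | fdeg c₀ ω = M₀} := by
        ext ω
        simp only [Set.mem_setOf_eq]
        have h3 := Set.ext_iff.mp hA ω
        simp only [Set.mem_setOf_eq] at h3
        have h4 := hval ω
        have h5 := hval0 ω
        omega
      rcases hcross with hcr | hcr
      · right
        constructor
        · intro p hp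
          rw [Set.mem_prod]
          constructor
          · have h1 : p.1 ∈ {ω | fdeg c ω = M} := (hcr p hp).1
            rwa [hA] at h1
          · have h1 : p.2 ∈ {ω | fdeg c ω = m} := (hcr p hp).2
            rwa [hB] at h1
        · intro ω hω ω' hω'
          rw [← hA] at hω hω'
          exact (Set.mem_setOf_eq ▸ hω).trans (Set.mem_setOf_eq ▸ hω').symm
      · left
        constructor
        · intro p hp
          rw [Set.mem_prod]
          constructor
          · have h1 : p.1 ∈ {ω | fdeg c ω = m} := (hcr p hp).1
            rwa [hB] at h1
          · have h1 : p.2 ∈ {ω | fdeg c ω = M} := (hcr p hp).2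
            rwa [hA] at h1
        · intro ω hω ω' hω'
          rw [← hB] at hω hω'
          exact (Set.mem_setOf_eq ▸ hω).trans (Set.mem_setOf_eq ▸ hω').symm

end JordanPaper

end
end

section
/- Let (Ω,C) be a symmetric Jordan configuration (every class C satisfies C^T = C) and let A ⊆ M_Ω(ℝ) be the linear span of the adjacency matrices of the classes of C. The following are equivalent: (a) every class of C is a regular relation (constant valency); (b) the diagonal relation 1_Ω is a class of C; (c) A·J_Ω ∈ span{J_Ω} for every A ∈ A; (d) A★J_Ω ∈ span{J_Ω} for every A ∈ A, where A★B = (AB+BA)/2. -/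
open Matrix

noncomputable section

namespace JordanPaper

open scoped Classical

variable {Ω : Type*}

/-! For a symmetric class `c`, the Jordan condition for `c, c` on the diagonal class says that
`jnum c c ω ω = 2 |c(ω)|` does not depend on `ω`, so every class is regular once `1_Ω` is a class.
Conversely, a regular class through a diagonal pair `(α, α)` lies in `1_Ω` and has valency `1`, so
it is all of `1_Ω`. On the matrix side the row sums of `adj c` are the valencies of `c`, and all
conditions on `x` are linear, so they need only be checked on the symmetric matrices `adj c`. -/

theorem forall_mem_span_apply_mem_iff {R M N : Type*} [Semiring R] [AddCommMonoid M] [Module R M]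
    [AddCommMonoid N] [Module R N] (f : M →ₗ[R] N) (s : Set M) (q : Submodule R N) :
    (∀ x ∈ Submodule.span R s, f x ∈ q) ↔ ∀ x ∈ s, f x ∈ q :=
  Submodule.span_le (p := q.comap f)

theorem eq_diagRel_of_ncard_outSet_eq [Finite Ω] {c : Set (Ω × Ω)} {α : Ω}
    (hc : c ⊆ diagRel Set.univ) (hα : (α, α) ∈ c)
    (hreg : ∀ ω ω' : Ω, (outSet c ω).ncard = (outSet c ω').ncard) :
    c = diagRel Set.univ := by
  refine hc.antisymm ?_
  rintro ⟨β, _⟩ ⟨rfl : β = _, -⟩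
  have hne : (outSet c β).Nonempty := by
    rw [← Set.ncard_pos, hreg β α, Set.ncard_pos]
    exact ⟨α, hα⟩
  obtain ⟨γ, hγ⟩ := hne
  obtain ⟨rfl : β = γ, -⟩ := hc hγ
  exact hγ

theorem IsRainbow.diagRel_mem [Finite Ω] [Nonempty Ω] {P : Set (Set (Ω × Ω))}
    (hP : IsRainbow P) (hreg : ∀ c ∈ P, ∀ ω ω' : Ω, (outSet c ω).ncard = (outSet c ω').ncard) :
    diagRel Set.univ ∈ P := by
  obtain ⟨α⟩ := ‹Nonempty Ω›
  obtain ⟨c, hc, hαc⟩ : (α, α) ∈ ⋃₀ P := by rw [hP.1.2.2]; trivial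
  have hsub := hP.2.1 c hc ⟨(α, α), hαc, rfl, trivial⟩
  rwa [← eq_diagRel_of_ncard_outSet_eq hsub hαc (hreg c hc)]

theorem cnum_self_of_transposeRel_eq {c : Set (Ω × Ω)} (hc : transposeRel c = c) (ω : Ω) :
    cnum c c ω ω = (outSet c ω).ncard := by
  rw [cnum, hc, Set.inter_self]

theorem IsJordanCond.ncard_outSet_eq {P : Set (Set (Ω × Ω))} (hP : IsJordanCond P)
    (hdiag : diagRel Set.univ ∈ P) {c : Set (Ω × Ω)} (hc : c ∈ P) (hcT : transposeRel c = c)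
    (ω ω' : Ω) : (outSet c ω).ncard = (outSet c ω').ncard := by
  have h := hP c hc c hc _ hdiag (ω, ω) ⟨rfl, trivial⟩ (ω', ω') ⟨rfl, trivial⟩
  simp only [jnum, cnum_self_of_transposeRel_eq hcT] at h
  omega

@[simp]
theorem allOnes_apply {F : Type*} [One F] (α β : Ω) : (allOnes F : Matrix Ω Ω F) α β = 1 := rfl

theorem isSymm_adj {F : Type*} [Zero F] [One F] {c : Set (Ω × Ω)} (hc : transposeRel c = c) :
    (adj F c).IsSymm := by
  ext α β
  simp only [Matrix.transpose_apply, adj, Matrix.of_apply]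
  rw [show ((β, α) ∈ c) = ((α, β) ∈ transposeRel c) from rfl, hc]

section Matrix

variable {F : Type*} [Field F] [Fintype Ω]

theorem mul_allOnes_apply (x : Matrix Ω Ω F) (α β : Ω) :
    (x * (allOnes F : Matrix Ω Ω F)) α β = ∑ γ, x α γ := by
  simp [allOnes, Matrix.mul_apply]

theorem allOnes_mul_apply (x : Matrix Ω Ω F) (α β : Ω) :
    ((allOnes F : Matrix Ω Ω F) * x) α β = ∑ γ, x γ β := by
  simp [allOnes, Matrix.mul_apply]

theorem mul_allOnes_eq_smul_iff (x : Matrix Ω Ω F) (l : F) :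
    x * (allOnes F : Matrix Ω Ω F) = l • (allOnes F : Matrix Ω Ω F) ↔ ∀ α, ∑ γ, x α γ = l := by
  simp only [← Matrix.ext_iff, mul_allOnes_apply, Matrix.smul_apply, allOnes_apply, smul_eq_mul,
    mul_one]
  exact ⟨fun h α => h α α, fun h α _ => h α⟩

theorem jmul_allOnes_eq_smul_iff [NeZero (2 : F)] {x : Matrix Ω Ω F} (hx : x.IsSymm) (l : F) :
    jmul F x (allOnes F : Matrix Ω Ω F) = l • (allOnes F : Matrix Ω Ω F) ↔
      x * (allOnes F : Matrix Ω Ω F) = l • (allOnes F : Matrix Ω Ω F) := by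
  -- for symmetric `x`, `(x ★ J) α β` is the mean of the row sums of `x` at `α` and `β`
  have hcol (β : Ω) : ∑ γ, x γ β = ∑ γ, x β γ := Finset.sum_congr rfl fun γ _ => hx.apply β γ
  rw [mul_allOnes_eq_smul_iff, ← Matrix.ext_iff]
  simp only [jmul, Matrix.smul_apply, Matrix.add_apply, mul_allOnes_apply, allOnes_mul_apply,
    hcol, allOnes_apply, smul_eq_mul, mul_one]
  refine ⟨fun h α => ?_, fun h α β => ?_⟩
  · simpa only [← two_mul, inv_mul_cancel_left₀ (two_ne_zero (α := F))] using h α α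
  · rw [h, h, ← two_mul, inv_mul_cancel_left₀ two_ne_zero]

theorem jmul_allOnes_mem_span_iff [NeZero (2 : F)] {x : Matrix Ω Ω F} (hx : x.IsSymm) :
    jmul F x (allOnes F : Matrix Ω Ω F) ∈ Submodule.span F {(allOnes F : Matrix Ω Ω F)} ↔
      x * (allOnes F : Matrix Ω Ω F) ∈ Submodule.span F {(allOnes F : Matrix Ω Ω F)} := by
  simp only [Submodule.mem_span_singleton, eq_comm (b := jmul F x _), eq_comm (b := x * _),
    jmul_allOnes_eq_smul_iff hx]

theorem sum_adj_apply (c : Set (Ω × Ω)) (α : Ω) :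
    ∑ γ, adj F c α γ = (outSet c α).ncard := by
  rw [show outSet c α = ↑(Finset.univ.filter fun β => (α, β) ∈ c) by ext; simp [outSet],
    Set.ncard_coe_finset]
  simp [adj, Finset.sum_boole]

theorem adj_mul_allOnes_mem_span_iff [CharZero F] [Nonempty Ω] (c : Set (Ω × Ω)) :
    adj F c * (allOnes F : Matrix Ω Ω F) ∈ Submodule.span F {(allOnes F : Matrix Ω Ω F)} ↔
      ∀ ω ω' : Ω, (outSet c ω).ncard = (outSet c ω').ncard := by
  simp only [Submodule.mem_span_singleton, eq_comm (b := adj F c * _), mul_allOnes_eq_smul_iff,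
    sum_adj_apply]
  refine ⟨fun ⟨l, hl⟩ ω ω' => by exact_mod_cast (hl ω).trans (hl ω').symm, fun h => ?_⟩
  obtain ⟨ω₀⟩ := ‹Nonempty Ω›
  exact ⟨_, fun ω => congrArg (Nat.cast (R := F)) (h ω ω₀)⟩

def jmulRight (y : Matrix Ω Ω F) : Matrix Ω Ω F →ₗ[F] Matrix Ω Ω F :=
  (2⁻¹ : F) • (LinearMap.mulRight F y + LinearMap.mulLeft F y)

end Matrix

theorem statement8_general {Ω : Type*} [Fintype Ω] [Nonempty Ω]
    (P : Set (Set (Ω × Ω))) (hJC : IsJordanConfig P)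
    (hsym : ∀ c ∈ P, transposeRel c = c) :
    ((∀ c ∈ P, ∀ ω ω' : Ω, (outSet c ω).ncard = (outSet c ω').ncard) ↔
      diagRel (Set.univ : Set Ω) ∈ P) ∧
    ((diagRel (Set.univ : Set Ω) ∈ P) ↔
      ∀ x ∈ Submodule.span ℝ (adj ℝ '' P),
        x * (allOnes ℝ : Matrix Ω Ω ℝ) ∈ Submodule.span ℝ {(allOnes ℝ : Matrix Ω Ω ℝ)}) ∧
    ((∀ x ∈ Submodule.span ℝ (adj ℝ '' P),
        x * (allOnes ℝ : Matrix Ω Ω ℝ) ∈ Submodule.span ℝ {(allOnes ℝ : Matrix Ω Ω ℝ)}) ↔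
      ∀ x ∈ Submodule.span ℝ (adj ℝ '' P),
        jmul ℝ x (allOnes ℝ : Matrix Ω Ω ℝ) ∈ Submodule.span ℝ {(allOnes ℝ : Matrix Ω Ω ℝ)}) := by
  set J : Matrix Ω Ω ℝ := allOnes ℝ
  have hreg_iff_diag : (∀ c ∈ P, ∀ ω ω' : Ω, (outSet c ω).ncard = (outSet c ω').ncard) ↔
      diagRel Set.univ ∈ P :=
    ⟨hJC.1.diagRel_mem, fun hdiag c hc => hJC.2.ncard_outSet_eq hdiag hc (hsym c hc)⟩
  have hmul_iff_reg : (∀ x ∈ Submodule.span ℝ (adj ℝ '' P), x * J ∈ Submodule.span ℝ {J}) ↔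
      ∀ c ∈ P, ∀ ω ω' : Ω, (outSet c ω).ncard = (outSet c ω').ncard := by
    refine (forall_mem_span_apply_mem_iff (LinearMap.mulRight ℝ J) _ _).trans ?_
    rw [Set.forall_mem_image]
    exact forall₂_congr fun c _ => adj_mul_allOnes_mem_span_iff c
  have hmul_iff_jmul : (∀ x ∈ Submodule.span ℝ (adj ℝ '' P), x * J ∈ Submodule.span ℝ {J}) ↔
      ∀ x ∈ Submodule.span ℝ (adj ℝ '' P), jmul ℝ x J ∈ Submodule.span ℝ {J} := by
    refine (forall_mem_span_apply_mem_iff (LinearMap.mulRight ℝ J) _ _).trans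
      (Iff.trans ?_ (forall_mem_span_apply_mem_iff (jmulRight J) _ _).symm)
    rw [Set.forall_mem_image, Set.forall_mem_image]
    exact forall₂_congr fun c hc => (jmul_allOnes_mem_span_iff (isSymm_adj (hsym c hc))).symm
  exact ⟨hreg_iff_diag, hreg_iff_diag.symm.trans hmul_iff_reg.symm, hmul_iff_jmul⟩

theorem statement8 {Ω : Type*} [Fintype Ω] [DecidableEq Ω] [Nonempty Ω]
    (P : Set (Set (Ω × Ω))) (hJC : IsJordanConfig P)
    (hsym : ∀ c ∈ P, transposeRel c = c) :
    ((∀ c ∈ P, ∀ ω ω' : Ω, (outSet c ω).ncard = (outSet c ω').ncard) ↔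
      diagRel (Set.univ : Set Ω) ∈ P) ∧
    ((diagRel (Set.univ : Set Ω) ∈ P) ↔
      ∀ x ∈ Submodule.span ℝ (adj ℝ '' P),
        x * (allOnes ℝ : Matrix Ω Ω ℝ) ∈ Submodule.span ℝ {(allOnes ℝ : Matrix Ω Ω ℝ)}) ∧
    ((∀ x ∈ Submodule.span ℝ (adj ℝ '' P),
        x * (allOnes ℝ : Matrix Ω Ω ℝ) ∈ Submodule.span ℝ {(allOnes ℝ : Matrix Ω Ω ℝ)}) ↔
      ∀ x ∈ Submodule.span ℝ (adj ℝ '' P),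
        jmul ℝ x (allOnes ℝ : Matrix Ω Ω ℝ) ∈ Submodule.span ℝ {(allOnes ℝ : Matrix Ω Ω ℝ)}) :=
  statement8_general P hJC hsym

end JordanPaper

end
end
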